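/- arXiv:2311.18080 — 11 statements merged into one kernel-verified Lean document; each statement's English description precedes it below -/
import Mathlib

section
/- For any transposition (a₁ a₂) in Sₙ, and two additional symbols x = n+1 and y = n+2, the inverse of (a₁ a₂) equals the product (x y)(x a₂)(y a₁)(y a₂)(x a₁), and all five transpositions in the product are pairwise distinct and each involves x or y. -/
open Equiv

theorem Equiv.swap_eq_swap_iff {α : Type*} [DecidableEq α] {a b c d : α} (hab : a ≠ b) :
    swap a b = swap c d ↔ a = c ∧ b = d ∨ a = d ∧ b = c := by
  constructor
  · intro h
    -- `swap c d a = b ≠ a` forces `a ∈ {c, d}`, and then `b` is the other point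
    have := congr($h a)
    grind
  · rintro (⟨rfl, rfl⟩ | ⟨rfl, rfl⟩)
    · rfl
    · exact swap_comm a b

section SwapsVia

variable {α : Type*} [DecidableEq α] {a b x y : α}

def swapsVia (x y a b : α) : List (Perm α) :=
  [swap x y, swap x b, swap y a, swap y b, swap x a]

theorem swapsVia_prod (hab : a ≠ b) (hax : a ≠ x) (hay : a ≠ y) (hbx : b ≠ x) (hby : b ≠ y)
    (hxy : x ≠ y) : (swapsVia x y a b).prod = swap a b := by
  ext z
  simp only [swapsVia, List.prod_cons, List.prod_nil, mul_one, Perm.mul_apply, swap_apply_def]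
  grind

theorem swapsVia_pairwise_ne (hab : a ≠ b) (hax : a ≠ x) (hay : a ≠ y) (hbx : b ≠ x)
    (hby : b ≠ y) (hxy : x ≠ y) : (swapsVia x y a b).Pairwise (· ≠ ·) := by
  simp [swapsVia, swap_eq_swap_iff, hab, hax, hay, hbx, hby, hxy, hab.symm, hax.symm, hay.symm,
    hbx.symm, hby.symm, hxy.symm]

theorem apply_ne_or_apply_ne_of_mem_swapsVia (hax : a ≠ x) (hay : a ≠ y) (hbx : b ≠ x)
    (hby : b ≠ y) (hxy : x ≠ y) {t : Perm α} (ht : t ∈ swapsVia x y a b) :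
    t x ≠ x ∨ t y ≠ y := by
  simp only [swapsVia, List.mem_cons, List.not_mem_nil, or_false] at ht
  rcases ht with rfl | rfl | rfl | rfl | rfl <;>
    simp [hax, hay, hbx, hby, hxy, hxy.symm]

end SwapsVia

theorem stmt0_general (n a₁ a₂ : ℕ) (ha₁n : a₁ ≤ n)
    (ha₂n : a₂ ≤ n) (hne : a₁ ≠ a₂) :
    (Equiv.swap a₁ a₂)⁻¹ =
      Equiv.swap (n+1) (n+2) * Equiv.swap (n+1) a₂ * Equiv.swap (n+2) a₁ *
        Equiv.swap (n+2) a₂ * Equiv.swap (n+1) a₁ ∧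
    ([Equiv.swap (n+1) (n+2), Equiv.swap (n+1) a₂, Equiv.swap (n+2) a₁,
        Equiv.swap (n+2) a₂, Equiv.swap (n+1) a₁] : List (Equiv.Perm ℕ)).Pairwise (· ≠ ·) ∧
    ∀ t ∈ ([Equiv.swap (n+1) (n+2), Equiv.swap (n+1) a₂, Equiv.swap (n+2) a₁,
        Equiv.swap (n+2) a₂, Equiv.swap (n+1) a₁] : List (Equiv.Perm ℕ)),
      t (n+1) ≠ n+1 ∨ t (n+2) ≠ n+2 := by
  have hax : a₁ ≠ n + 1 := by omega
  have hay : a₁ ≠ n + 2 := by omega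
  have hbx : a₂ ≠ n + 1 := by omega
  have hby : a₂ ≠ n + 2 := by omega
  have hxy : n + 1 ≠ n + 2 := by omega
  refine ⟨?_, swapsVia_pairwise_ne hne hax hay hbx hby hxy,
    fun t ht => apply_ne_or_apply_ne_of_mem_swapsVia hax hay hbx hby hxy ht⟩
  rw [swap_inv, ← swapsVia_prod hne hax hay hbx hby hxy]
  simp only [swapsVia, List.prod_cons, List.prod_nil, mul_one, mul_assoc]

theorem stmt0 (n a₁ a₂ : ℕ) (ha₁ : 1 ≤ a₁) (ha₁n : a₁ ≤ n)
    (ha₂ : 1 ≤ a₂) (ha₂n : a₂ ≤ n) (hne : a₁ ≠ a₂) :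
    (Equiv.swap a₁ a₂)⁻¹ =
      Equiv.swap (n+1) (n+2) * Equiv.swap (n+1) a₂ * Equiv.swap (n+2) a₁ *
        Equiv.swap (n+2) a₂ * Equiv.swap (n+1) a₁ ∧
    ([Equiv.swap (n+1) (n+2), Equiv.swap (n+1) a₂, Equiv.swap (n+2) a₁,
        Equiv.swap (n+2) a₂, Equiv.swap (n+1) a₁] : List (Equiv.Perm ℕ)).Pairwise (· ≠ ·) ∧
    ∀ t ∈ ([Equiv.swap (n+1) (n+2), Equiv.swap (n+1) a₂, Equiv.swap (n+2) a₁,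
        Equiv.swap (n+2) a₂, Equiv.swap (n+1) a₁] : List (Equiv.Perm ℕ)),
      t (n+1) ≠ n+1 ∨ t (n+2) ≠ n+2 :=
  stmt0_general n a₁ a₂ ha₁n ha₂n hne
end

section
/- For any k-cycle τ = (a₁ a₂ ⋯ a_k) in Sₙ with k ≥ 2, its inverse can be written as the product (x y) · (x a₂)(x a₃)⋯(x a_k) · (y a₁)(y a₂)(x a₁) of transpositions in S_{n+2}, each of which moves x or y, and all transpositions in this product are pairwise distinct. -/
open Equiv List

lemma aux_formPerm_map {α : Type*} [DecidableEq α] (f : Equiv.Perm α) :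
    ∀ (l : List α), (l.map f).formPerm = f * l.formPerm * f⁻¹
  | [] => by simp
  | [a] => by simp
  | a :: b :: t => by
    have IH := aux_formPerm_map f (b :: t)
    simp only [List.map_cons] at IH ⊢
    rw [List.formPerm_cons_cons, List.formPerm_cons_cons, IH, Equiv.swap_apply_apply]
    group

lemma aux_cons_formPerm {α : Type*} [DecidableEq α] (a : α) (t : List α) (ht : t ≠ [])
    (h : (a :: t).Nodup) :
    (a :: t).formPerm = t.formPerm * Equiv.swap (t.getLast ht) a := by
  obtain ⟨b, t', rfl⟩ := List.exists_cons_of_ne_nil ht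
  have h1 : (b :: t').formPerm a = a := by
    apply List.formPerm_apply_of_notMem
    simp only [List.nodup_cons] at h
    exact h.1
  have h2 := List.formPerm_apply_getLast b t'
  have key := Equiv.swap_apply_apply ((b :: t').formPerm) ((b :: t').getLast (List.cons_ne_nil _ _)) a
  rw [h1, h2] at key
  rw [List.formPerm_cons_cons, Equiv.swap_comm, key]
  group

lemma aux_prod_map_swap {α : Type*} [DecidableEq α] (x : α) :
    ∀ (m : List α), (x :: m).Nodup → (m.map (Equiv.swap x)).prod = ((x :: m).formPerm)⁻¹
  | [], _ => by simp
  | a :: m', h => by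
    have h' : (x :: m').Nodup := by
      simp only [List.nodup_cons, List.mem_cons] at h ⊢
      tauto
    have IH := aux_prod_map_swap x m' h'
    have h2 : (a :: (m' ++ [x])).Nodup := by
      rw [show a :: (m' ++ [x]) = (x :: a :: m').rotate 1 from by simp [List.rotate_cons_succ]]
      exact List.nodup_rotate.mpr h
    have key := aux_cons_formPerm a (m' ++ [x]) (by simp) h2
    rw [List.getLast_concat] at key
    have h4 := List.formPerm_rotate_one (x :: m') h'
    rw [show (x :: m').rotate 1 = m' ++ [x] by simp [List.rotate_cons_succ]] at h4
    have h5 := List.formPerm_rotate_one (x :: a :: m') h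
    rw [show (x :: a :: m').rotate 1 = a :: (m' ++ [x]) by simp [List.rotate_cons_succ]] at h5
    rw [List.map_cons, List.prod_cons, IH, ← h5, key, h4, mul_inv_rev, Equiv.swap_inv]

lemma aux_swap_ne_left {α : Type*} [DecidableEq α] {u v w z : α}
    (h1 : u ≠ v) (h2 : u ≠ w) (h3 : u ≠ z) : Equiv.swap u v ≠ Equiv.swap w z := by
  intro h
  have hh : Equiv.swap u v u = Equiv.swap w z u := by rw [h]
  rw [Equiv.swap_apply_left, Equiv.swap_apply_of_ne_of_ne h2 h3] at hh
  exact h1 hh.symm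

lemma aux_swap_ne_right {α : Type*} [DecidableEq α] {u v w z : α}
    (h1 : v ≠ u) (h2 : v ≠ w) (h3 : v ≠ z) : Equiv.swap u v ≠ Equiv.swap w z := by
  intro h
  have hh : Equiv.swap u v v = Equiv.swap w z v := by rw [h]
  rw [Equiv.swap_apply_right, Equiv.swap_apply_of_ne_of_ne h2 h3] at hh
  exact h1 hh.symm

theorem stmt1 (n k : ℕ) (hk : 2 ≤ k) (l : List ℕ) (hlen : l.length = k)
    (hnd : l.Nodup) (hmem : ∀ a ∈ l, 1 ≤ a ∧ a ≤ n)
    (a₁ a₂ : ℕ) (rest : List ℕ) (hl : l = a₁ :: a₂ :: rest) :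
    l.formPerm⁻¹ =
      Equiv.swap (n+1) (n+2) * ((a₂ :: rest).map (Equiv.swap (n+1))).prod *
        Equiv.swap (n+2) a₁ * Equiv.swap (n+2) a₂ * Equiv.swap (n+1) a₁ ∧
    (Equiv.swap (n+1) (n+2) :: ((a₂ :: rest).map (Equiv.swap (n+1))) ++
      [Equiv.swap (n+2) a₁, Equiv.swap (n+2) a₂, Equiv.swap (n+1) a₁]).Pairwise (· ≠ ·) ∧
    ∀ t ∈ (Equiv.swap (n+1) (n+2) :: ((a₂ :: rest).map (Equiv.swap (n+1))) ++
      [Equiv.swap (n+2) a₁, Equiv.swap (n+2) a₂, Equiv.swap (n+1) a₁]),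
      t (n+1) ≠ n+1 ∨ t (n+2) ≠ n+2 := by
  subst hl
  have ha₁ : a₁ ≤ n := (hmem a₁ (by simp)).2
  have ha₂ : a₂ ≤ n := (hmem a₂ (by simp)).2
  have hb : ∀ b ∈ a₂ :: rest, b ≤ n := fun b hb => (hmem b (List.mem_cons_of_mem _ hb)).2
  obtain ⟨hnd1, hnd2⟩ := List.nodup_cons.mp hnd
  have hba₁ : ∀ b ∈ a₂ :: rest, b ≠ a₁ := fun b hbm he => hnd1 (he ▸ hbm)
  have hnx : (n+1) ∉ (a₂ :: rest) := fun h => by have := hb _ h; omega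
  have hny : (n+2) ∉ (a₂ :: rest) := fun h => by have := hb _ h; omega
  have hGnd : ((n+1) :: a₂ :: rest).Nodup := List.nodup_cons.mpr ⟨hnx, hnd2⟩
  have hQ := aux_prod_map_swap (n+1) (a₂ :: rest) hGnd
  set G := ((n+1) :: a₂ :: rest).formPerm with hGdef
  -- conjugation relation between formPerm l and G
  have hmapeq : ((a₁ :: a₂ :: rest).map (Equiv.swap (n+1) a₁)) = (n+1) :: a₂ :: rest := by
    rw [List.map_cons, Equiv.swap_apply_right]
    congr 1
    rw [List.map_congr_left (g := id) ?_, List.map_id]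
    intro b hbm
    exact Equiv.swap_apply_of_ne_of_ne (by have := hb b hbm; omega) (hba₁ b hbm)
  have hs : Equiv.swap (n+1) a₁ * Equiv.swap (n+1) a₁ = 1 := Equiv.swap_mul_self _ _
  have hF : (a₁ :: a₂ :: rest).formPerm = Equiv.swap (n+1) a₁ * G * Equiv.swap (n+1) a₁ := by
    have h0 := aux_formPerm_map (Equiv.swap (n+1) a₁) (a₁ :: a₂ :: rest)
    rw [hmapeq, ← hGdef, Equiv.swap_inv] at h0
    rw [h0]
    simp only [← mul_assoc]
    rw [hs, one_mul, mul_assoc, hs, mul_one]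
  have hFinv : (a₁ :: a₂ :: rest).formPerm⁻¹ =
      Equiv.swap (n+1) a₁ * G⁻¹ * Equiv.swap (n+1) a₁ := by
    rw [hF, mul_inv_rev, mul_inv_rev, Equiv.swap_inv, mul_assoc]
  -- pointwise values of G
  have hGy : G (n+2) = n+2 := List.formPerm_apply_of_notMem (by
    intro h
    rcases List.mem_cons.mp h with h | h
    · omega
    · exact hny h)
  have hGa₁ : G a₁ = a₁ := List.formPerm_apply_of_notMem (by
    intro h
    rcases List.mem_cons.mp h with h | h
    · omega
    · exact hnd1 h)
  have hGx : G (n+1) = a₂ := List.formPerm_apply_head _ _ _ hGnd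
  have hiy : G⁻¹ (n+2) = n+2 := by rw [Equiv.Perm.inv_eq_iff_eq, hGy]
  have hia₁ : G⁻¹ a₁ = a₁ := by rw [Equiv.Perm.inv_eq_iff_eq, hGa₁]
  have hia₂ : G⁻¹ a₂ = n+1 := by rw [Equiv.Perm.inv_eq_iff_eq, hGx]
  have c1 : G⁻¹ * Equiv.swap (n+2) a₁ = Equiv.swap (n+2) a₁ * G⁻¹ := by
    have h0 := Equiv.swap_apply_apply G⁻¹ (n+2) a₁
    rw [hiy, hia₁, inv_inv] at h0
    conv_rhs => rw [h0]
    group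
  have c2 : G⁻¹ * Equiv.swap (n+2) a₂ = Equiv.swap (n+2) (n+1) * G⁻¹ := by
    have h0 := Equiv.swap_apply_apply G⁻¹ (n+2) a₂
    rw [hiy, hia₂, inv_inv] at h0
    rw [h0]
    group
  have c3 : Equiv.swap (n+1) (n+2) * Equiv.swap (n+2) a₁ * Equiv.swap (n+1) (n+2) =
      Equiv.swap (n+1) a₁ := by
    have h0 := Equiv.swap_apply_apply (Equiv.swap (n+1) (n+2)) (n+2) a₁
    rw [Equiv.swap_apply_right, Equiv.swap_apply_of_ne_of_ne (by omega : a₁ ≠ n+1)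
      (by omega : a₁ ≠ n+2), Equiv.swap_inv] at h0
    exact h0.symm
  refine ⟨?_, ?_, ?_⟩
  · rw [hQ, hFinv]
    symm
    calc Equiv.swap (n+1) (n+2) * G⁻¹ * Equiv.swap (n+2) a₁ * Equiv.swap (n+2) a₂ *
          Equiv.swap (n+1) a₁
        = Equiv.swap (n+1) (n+2) * (G⁻¹ * Equiv.swap (n+2) a₁) * Equiv.swap (n+2) a₂ *
          Equiv.swap (n+1) a₁ := by group
      _ = Equiv.swap (n+1) (n+2) * (Equiv.swap (n+2) a₁ * G⁻¹) * Equiv.swap (n+2) a₂ *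
          Equiv.swap (n+1) a₁ := by rw [c1]
      _ = Equiv.swap (n+1) (n+2) * Equiv.swap (n+2) a₁ * (G⁻¹ * Equiv.swap (n+2) a₂) *
          Equiv.swap (n+1) a₁ := by group
      _ = Equiv.swap (n+1) (n+2) * Equiv.swap (n+2) a₁ * (Equiv.swap (n+2) (n+1) * G⁻¹) *
          Equiv.swap (n+1) a₁ := by rw [c2]
      _ = (Equiv.swap (n+1) (n+2) * Equiv.swap (n+2) a₁ * Equiv.swap (n+2) (n+1)) *
          (G⁻¹ * Equiv.swap (n+1) a₁) := by group
      _ = (Equiv.swap (n+1) (n+2) * Equiv.swap (n+2) a₁ * Equiv.swap (n+1) (n+2)) *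
          (G⁻¹ * Equiv.swap (n+1) a₁) := by rw [Equiv.swap_comm (n+2) (n+1)]
      _ = Equiv.swap (n+1) a₁ * (G⁻¹ * Equiv.swap (n+1) a₁) := by rw [c3]
      _ = Equiv.swap (n+1) a₁ * G⁻¹ * Equiv.swap (n+1) a₁ := by group
  · refine List.Pairwise.cons ?_ ?_
    · intro t ht
      rcases List.mem_append.mp ht with htm | htu
      · obtain ⟨b, hbm, rfl⟩ := List.mem_map.mp htm
        exact aux_swap_ne_right (by omega) (by omega) (fun h => by have := hb b hbm; omega)
      · simp only [List.mem_cons, List.mem_singleton, List.not_mem_nil, or_false] at htu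
        rcases htu with rfl | rfl | rfl
        · exact aux_swap_ne_left (by omega) (by omega) (by omega)
        · exact aux_swap_ne_left (by omega) (by omega) (by omega)
        · exact aux_swap_ne_right (by omega) (by omega) (by omega)
    · rw [List.append_eq, List.pairwise_append]
      refine ⟨?_, ?_, ?_⟩
      · rw [List.pairwise_map]
        refine hnd2.imp_of_mem ?_
        intro a b ham hbm hne
        exact aux_swap_ne_right (fun h => by have := hb a ham; omega)
          (fun h => by have := hb a ham; omega) hne
      · refine List.Pairwise.cons ?_ (List.Pairwise.cons ?_ (List.pairwise_singleton _ _))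
        · intro t ht
          simp only [List.mem_cons, List.mem_singleton, List.not_mem_nil, or_false] at ht
          rcases ht with rfl | rfl
          · exact aux_swap_ne_right (by omega) (by omega) (hba₁ a₂ (by simp)).symm
          · exact aux_swap_ne_left (by omega) (by omega) (by omega)
        · intro t ht
          simp only [List.mem_singleton] at ht
          subst ht
          exact aux_swap_ne_left (by omega) (by omega) (by omega)
      · intro t htm u htu
        obtain ⟨b, hbm, rfl⟩ := List.mem_map.mp htm
        simp only [List.mem_cons, List.mem_singleton, List.not_mem_nil, or_false] at htu
        rcases htu with rfl | rfl | rfl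
        · exact aux_swap_ne_left (fun h => by have := hb b hbm; omega) (by omega) (by omega)
        · exact aux_swap_ne_left (fun h => by have := hb b hbm; omega) (by omega) (by omega)
        · exact aux_swap_ne_right (fun h => by have := hb b hbm; omega)
            (fun h => by have := hb b hbm; omega) (hba₁ b hbm)
  · intro t ht
    rcases List.mem_cons.mp ht with rfl | ht'
    · left
      rw [Equiv.swap_apply_left]
      omega
    rcases List.mem_append.mp ht' with htm | htu
    · obtain ⟨b, hbm, rfl⟩ := List.mem_map.mp htm
      left
      rw [Equiv.swap_apply_left]
      have := hb b hbm; omega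
    · simp only [List.mem_cons, List.mem_singleton, List.not_mem_nil, or_false] at htu
      rcases htu with rfl | rfl | rfl
      · right; rw [Equiv.swap_apply_left]; omega
      · right; rw [Equiv.swap_apply_left]; omega
      · left; rw [Equiv.swap_apply_left]; omega
end

section
/- For a k-cycle τ = (a₁ ⋯ a_k) in Sₙ, define τ̌ = (x a₂)(x a₃)⋯(x a_k)(y a₁)(y a₂)(x a₁) in S_{n+2}. Then τ̌ · τ = (x y). -/
/-!
Write `τ = (a b) τ'` with `τ' = (b c₂ ⋯ c_m)`. Since `(x b c₂ ⋯ c_m) = (x c_m) ⋯ (x c₂) (x b)`,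
the product `(x b)(x c₂) ⋯ (x c_m)` is `((x b) τ')⁻¹`. The remaining four transpositions
collapse, `(y a)(y b)(x a)(a b) = (x b)(x y)`, and `(x y)` commutes with `τ'`, so
`τ̌ τ = ((x b) τ')⁻¹ (x b) τ' (x y) = (x y)`.
-/

open Equiv

namespace List

variable {α : Type*} [DecidableEq α]

theorem map_swap_eq_self {x y : α} {l : List α} (hx : x ∉ l) (hy : y ∉ l) :
    l.map (Equiv.swap x y) = l :=
  (map_congr_left fun _ hz ↦ swap_apply_of_ne_of_ne (ne_of_mem_of_not_mem hz hx)
    (ne_of_mem_of_not_mem hz hy)).trans (map_id l)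

theorem mul_formPerm (σ : Equiv.Perm α) : ∀ l : List α, σ * formPerm l = formPerm (l.map σ) * σ
  | [] | [_] => by simp
  | a :: b :: l => by
    rw [formPerm_cons_cons, ← mul_assoc, mul_swap_eq_swap_mul, mul_assoc, mul_formPerm σ (b :: l)]
    simp [mul_assoc]

theorem formPerm_cons_cons_eq_mul_swap {x c : α} {l : List α} (hx : x ∉ l) (hc : c ∉ l) :
    formPerm (x :: c :: l) = formPerm (x :: l) * Equiv.swap x c := by
  rw [formPerm_cons_cons, mul_formPerm, map_cons, swap_apply_right, map_swap_eq_self hx hc]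

theorem prod_map_swap_eq_formPerm_cons_inv {x : α} :
    ∀ {l : List α}, (x :: l).Nodup → (l.map (Equiv.swap x)).prod = (formPerm (x :: l))⁻¹
  | [], _ => by simp
  | c :: l, hnd => by
    simp only [nodup_cons, mem_cons, not_or] at hnd
    obtain ⟨⟨-, hxl⟩, hcl, hl⟩ := hnd
    rw [map_cons, prod_cons, formPerm_cons_cons_eq_mul_swap hxl hcl,
      prod_map_swap_eq_formPerm_cons_inv (nodup_cons.2 ⟨hxl, hl⟩), mul_inv_rev, swap_inv]

end List

namespace Equiv

variable {α : Type*} [DecidableEq α]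

theorem swap_mul_swap_mul_swap_mul_swap {x y a b : α} (hxy : x ≠ y) (hxa : x ≠ a) (hxb : x ≠ b)
    (hya : y ≠ a) (hyb : y ≠ b) (hab : a ≠ b) :
    swap y a * swap y b * swap x a * swap a b = swap x b * swap x y := by
  ext z
  simp only [Perm.mul_apply, swap_apply_def]
  split_ifs <;> simp_all

open List in
theorem prod_map_swap_mul_swap_mul_formPerm {x y a b : α} {l : List α} (hxy : x ≠ y)
    (hnd : (a :: b :: l).Nodup) (hx : x ∉ a :: b :: l) (hy : y ∉ a :: b :: l) :
    ((b :: l).map (swap x)).prod * swap y a * swap y b * swap x a * formPerm (a :: b :: l) =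
      swap x y := by
  simp only [mem_cons, not_or] at hx hy
  have hab : a ≠ b := by simp_all
  have hP : ((b :: l).map (swap x)).prod = (swap x b * formPerm (b :: l))⁻¹ := by
    rw [prod_map_swap_eq_formPerm_cons_inv (by simp_all), formPerm_cons_cons]
  have hxyl : swap x y * formPerm (b :: l) = formPerm (b :: l) * swap x y := by
    rw [mul_formPerm, map_swap_eq_self (by simp_all) (by simp_all)]
  calc ((b :: l).map (swap x)).prod * swap y a * swap y b * swap x a * formPerm (a :: b :: l)
      = ((b :: l).map (swap x)).prod * (swap y a * swap y b * swap x a * swap a b) *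
          formPerm (b :: l) := by simp only [formPerm_cons_cons, mul_assoc]
    _ = (swap x b * formPerm (b :: l))⁻¹ * (swap x b * formPerm (b :: l)) * swap x y := by
          rw [swap_mul_swap_mul_swap_mul_swap hxy hx.1 hx.2.1 hy.1 hy.2.1 hab, hP, mul_assoc,
            mul_assoc, hxyl]
          simp only [mul_assoc]
    _ = swap x y := by rw [inv_mul_cancel, one_mul]

end Equiv

theorem stmt2_general (n : ℕ) (l : List ℕ)
    (hnd : l.Nodup) (hmem : ∀ a ∈ l, 1 ≤ a ∧ a ≤ n)
    (a₁ a₂ : ℕ) (rest : List ℕ) (hl : l = a₁ :: a₂ :: rest) :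
    (((a₂ :: rest).map (Equiv.swap (n+1))).prod *
        Equiv.swap (n+2) a₁ * Equiv.swap (n+2) a₂ * Equiv.swap (n+1) a₁) *
      l.formPerm = Equiv.swap (n+1) (n+2) := by
  subst hl
  exact Equiv.prod_map_swap_mul_swap_mul_formPerm (by omega) hnd
    (fun h ↦ by have := hmem _ h; omega) (fun h ↦ by have := hmem _ h; omega)

theorem stmt2 (n k : ℕ) (hk : 2 ≤ k) (l : List ℕ) (hlen : l.length = k)
    (hnd : l.Nodup) (hmem : ∀ a ∈ l, 1 ≤ a ∧ a ≤ n)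
    (a₁ a₂ : ℕ) (rest : List ℕ) (hl : l = a₁ :: a₂ :: rest) :
    (((a₂ :: rest).map (Equiv.swap (n+1))).prod *
        Equiv.swap (n+2) a₁ * Equiv.swap (n+2) a₂ * Equiv.swap (n+1) a₁) *
      l.formPerm = Equiv.swap (n+1) (n+2) :=
  stmt2_general n l hnd hmem a₁ a₂ rest hl
end

section
/- Let σ ∈ Sₙ be a product of j pairwise disjoint cycles τ₁,…,τ_j (each of length ≥ 2). With τ̌ᵢ defined as τ̌ᵢ = (x a_{i,2})⋯(x a_{i,kᵢ})(y a_{i,1})(y a_{i,2})(x a_{i,1}) for τᵢ = (a_{i,1} ⋯ a_{i,kᵢ}), we have σ⁻¹ = (x y)·τ̌_j⋯τ̌₁ if j is odd, and σ⁻¹ = τ̌_j⋯τ̌₁ if j is even. -/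
/-!
The product of transpositions `(x a₂)⋯(x a_k)` is the inverse of the cycle `(x a₂ ⋯ a_k)`, which
is `(x a₂)(a₁ a₂)τ` for `τ = (a₁ a₂ ⋯ a_k)`. Hence `τ̌ = τ⁻¹ (a₁ a₂)(x a₂)(y a₁)(y a₂)(x a₁)`, and
the five transpositions on the four points `x, y, a₁, a₂` multiply to `(x y)`. So every `τ̌ᵢ` is
`(x y) τᵢ⁻¹`, and as `(x y)` commutes with all `τᵢ`, the product `τ̌_j⋯τ̌₁` is `(x y)^j σ⁻¹`.
-/

/-- `tauCheck x y l` is the permutation τ̌ associated to the cycle given by the list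
`l = [a₁, a₂, …]`, namely `(x a₂)(x a₃)⋯(x a_k)(y a₁)(y a₂)(x a₁)`. -/
def tauCheck (x y : ℕ) : List ℕ → Equiv.Perm ℕ
  | a₁ :: a₂ :: rest =>
      ((a₂ :: rest).map (Equiv.swap x)).prod * Equiv.swap y a₁ *
        Equiv.swap y a₂ * Equiv.swap x a₁
  | _ => 1

section
variable {α : Type*} [DecidableEq α]

theorem Equiv.commute_swap_of_apply_eq {f : Equiv.Perm α} {x y : α} (hx : f x = x)
    (hy : f y = y) : Commute (Equiv.swap x y) f := by
  rw [Commute, SemiconjBy, Equiv.swap_mul_eq_mul_swap, Equiv.Perm.inv_eq_iff_eq.2 hx.symm,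
    Equiv.Perm.inv_eq_iff_eq.2 hy.symm]

theorem Equiv.swap_mul_swap_mul_swap_mul_swap_s3 {x y a b : α} (hxy : x ≠ y)
    (hxa : x ≠ a) (hxb : x ≠ b) (hya : y ≠ a) (hyb : y ≠ b) (hab : a ≠ b) :
    swap x b * swap y a * swap y b * swap x a = swap a b * swap x y := by
  ext z
  by_cases z = x <;> by_cases z = y <;> by_cases z = a <;> by_cases z = b <;>
    simp_all [swap_apply_of_ne_of_ne, Ne.symm]

theorem List.formPerm_map_perm (f : Equiv.Perm α) :
    ∀ l : List α, formPerm (l.map f) = f * formPerm l * f⁻¹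
  | [] => by simp
  | [_] => by simp
  | a :: b :: l => by
    rw [map_cons, map_cons, formPerm_cons_cons, ← map_cons, formPerm_map_perm f (b :: l),
      formPerm_cons_cons, Equiv.swap_apply_apply]
    group

theorem List.formPerm_cons_eq_swap_mul_formPerm_cons_mul_swap {x a : α} {l : List α}
    (hx : x ∉ l) (ha : a ∉ l) :
    formPerm (a :: l) = Equiv.swap x a * formPerm (x :: l) * Equiv.swap x a := by
  have hmap : (x :: l).map (Equiv.swap x a) = a :: l := by
    rw [map_cons, Equiv.swap_apply_left, map_congr_left fun b hb =>
      Equiv.swap_apply_of_ne_of_ne (ne_of_mem_of_not_mem hb hx) (ne_of_mem_of_not_mem hb ha),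
      map_id']
  rw [← hmap, formPerm_map_perm, Equiv.swap_inv]

theorem List.prod_map_swap_eq_formPerm_inv {x : α} :
    ∀ {l : List α}, x ∉ l → l.Nodup → (l.map (Equiv.swap x)).prod = (formPerm (x :: l))⁻¹
  | [], _, _ => by simp
  | a :: l, hx, hnd => by
    rw [mem_cons, not_or] at hx
    rw [nodup_cons] at hnd
    rw [map_cons, prod_cons, prod_map_swap_eq_formPerm_inv hx.2 hnd.2, formPerm_cons_cons,
      formPerm_cons_eq_swap_mul_formPerm_cons_mul_swap hx.2 hnd.1]
    simp [mul_assoc]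

end

theorem List.prod_reverse_map_mul_inv_of_commute {G : Type*} [Group G] (s : G) :
    ∀ {fs : List G}, (∀ f ∈ fs, Commute s f) →
      (fs.reverse.map fun f => s * f⁻¹).prod = s ^ fs.length * fs.prod⁻¹
  | [], _ => by simp
  | f :: fs, h => by
    have hs : Commute s fs.prod⁻¹ :=
      (Commute.list_prod_right _ _ fun g hg => h g (mem_cons_of_mem _ hg)).inv_right
    rw [reverse_cons, map_append, prod_append, prod_reverse_map_mul_inv_of_commute s
      fun g hg => h g (mem_cons_of_mem _ hg), length_cons, pow_succ, prod_cons, mul_inv_rev]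
    simp only [map_cons, map_nil, prod_cons, prod_nil, mul_one, mul_assoc]
    rw [← mul_assoc fs.prod⁻¹, ← hs.eq, mul_assoc]

theorem pow_eq_ite_of_mul_self_eq_one {M : Type*} [Monoid M] {s : M} (hs : s * s = 1) (n : ℕ) :
    s ^ n = if Odd n then s else 1 := by
  rcases Nat.even_or_odd' n with ⟨k, rfl | rfl⟩
  · simp [pow_mul, sq, hs]
  · simp [pow_succ, pow_mul, hs]

theorem tauCheck_eq_swap_mul_formPerm_inv {x y : ℕ} {l : List ℕ} (hxy : x ≠ y) (hnd : l.Nodup)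
    (hlen : 2 ≤ l.length) (hx : x ∉ l) (hy : y ∉ l) :
    tauCheck x y l = Equiv.swap x y * l.formPerm⁻¹ := by
  obtain _ | ⟨a₁, _ | ⟨a₂, rest⟩⟩ := l
  · simp at hlen
  · simp at hlen
  simp only [List.mem_cons, not_or] at hx hy
  have ha : a₁ ≠ a₂ := fun h => (List.nodup_cons.1 hnd).1 (h ▸ List.mem_cons_self)
  have hc : Commute (Equiv.swap x y) (a₁ :: a₂ :: rest).formPerm⁻¹ :=
    (Equiv.commute_swap_of_apply_eq (List.formPerm_apply_of_notMem (by simp [hx]))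
      (List.formPerm_apply_of_notMem (by simp [hy]))).inv_right
  rw [tauCheck, List.prod_map_swap_eq_formPerm_inv (by simp [hx]) (List.nodup_cons.1 hnd).2,
    hc.eq, List.formPerm_cons_cons, List.formPerm_cons_cons a₁]
  calc (Equiv.swap x a₂ * (a₂ :: rest).formPerm)⁻¹ * Equiv.swap y a₁ * Equiv.swap y a₂ *
        Equiv.swap x a₁
      = (a₂ :: rest).formPerm⁻¹ *
          (Equiv.swap x a₂ * Equiv.swap y a₁ * Equiv.swap y a₂ * Equiv.swap x a₁) := by
        simp only [mul_inv_rev, Equiv.swap_inv, mul_assoc]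
    _ = (Equiv.swap a₁ a₂ * (a₂ :: rest).formPerm)⁻¹ * Equiv.swap x y := by
        rw [Equiv.swap_mul_swap_mul_swap_mul_swap_s3 hxy hx.1 hx.2.1 hy.1 hy.2.1 ha]
        simp only [mul_inv_rev, Equiv.swap_inv, mul_assoc]

theorem prod_reverse_map_tauCheck {x y : ℕ} {L : List (List ℕ)} (hxy : x ≠ y)
    (hnd : ∀ l ∈ L, l.Nodup) (hlen : ∀ l ∈ L, 2 ≤ l.length) (hx : ∀ l ∈ L, x ∉ l)
    (hy : ∀ l ∈ L, y ∉ l) :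
    (L.reverse.map (tauCheck x y)).prod
      = Equiv.swap x y ^ L.length * (L.map List.formPerm).prod⁻¹ := by
  have hmap : L.reverse.map (tauCheck x y)
      = (L.map List.formPerm).reverse.map fun f => Equiv.swap x y * f⁻¹ := by
    rw [List.map_reverse, List.map_reverse, List.map_map]
    exact congrArg _ <| List.map_congr_left fun l hl =>
      tauCheck_eq_swap_mul_formPerm_inv hxy (hnd l hl) (hlen l hl) (hx l hl) (hy l hl)
  rw [hmap, List.prod_reverse_map_mul_inv_of_commute, List.length_map]
  simp only [List.mem_map, forall_exists_index, and_imp, forall_apply_eq_imp_iff₂]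
  exact fun l hl => Equiv.commute_swap_of_apply_eq (List.formPerm_apply_of_notMem (hx l hl))
    (List.formPerm_apply_of_notMem (hy l hl))

theorem stmt3_general (n : ℕ) (L : List (List ℕ)) (hnd : ∀ l ∈ L, l.Nodup)
    (hlen : ∀ l ∈ L, 2 ≤ l.length) (hmem : ∀ l ∈ L, ∀ a ∈ l, 1 ≤ a ∧ a ≤ n)
    (σ : Equiv.Perm ℕ) (hσ : σ = (L.map List.formPerm).prod) :
    σ⁻¹ = (if Odd L.length then Equiv.swap (n+1) (n+2) else 1) *
      (L.reverse.map (tauCheck (n+1) (n+2))).prod := by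
  have hx : ∀ l ∈ L, n + 1 ∉ l := fun l hl h => by have := hmem l hl _ h; omega
  have hy : ∀ l ∈ L, n + 2 ∉ l := fun l hl h => by have := hmem l hl _ h; omega
  rw [prod_reverse_map_tauCheck (by omega) hnd hlen hx hy, ← hσ, ← mul_assoc,
    pow_eq_ite_of_mul_self_eq_one (Equiv.swap_mul_self _ _)]
  split_ifs <;> simp

theorem stmt3 (n : ℕ) (L : List (List ℕ)) (hnd : ∀ l ∈ L, l.Nodup)
    (hlen : ∀ l ∈ L, 2 ≤ l.length) (hmem : ∀ l ∈ L, ∀ a ∈ l, 1 ≤ a ∧ a ≤ n)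
    (hdisj : L.Pairwise fun l l' => ∀ a ∈ l, a ∉ l')
    (σ : Equiv.Perm ℕ) (hσ : σ = (L.map List.formPerm).prod) :
    σ⁻¹ = (if Odd L.length then Equiv.swap (n+1) (n+2) else 1) *
      (L.reverse.map (tauCheck (n+1) (n+2))).prod :=
  stmt3_general n L hnd hlen hmem σ hσ
end

section
/- Let m ≥ 3 and n ≥ m, and let τ = (a₁ a₂ a₃) be a 3-cycle in Sₙ. Introduce m−2 new elements x₁,…,x_{m−2}. Then τ⁻¹ = (a₁ a₃ x₁ x₂ ⋯ x_{m−2}) · (a₃ a₂ x_{m−2} ⋯ x₂ x₁), a product of two m-cycles in S_{n+m−2} each of which moves an outsider, and these two m-cycles permute distinct sets of m elements. -/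
open Equiv

namespace List

variable {α : Type*} [DecidableEq α]

theorem formPerm_cons_cons_reverse (b c : α) (l : List α) (h : (b :: c :: l).Nodup) :
    (c :: b :: l.reverse).formPerm = (b :: c :: l).formPerm⁻¹ := by
  rw [← formPerm_reverse, ← formPerm_rotate _ (nodup_reverse.2 h) l.reverse.length,
    reverse_cons, reverse_cons, append_assoc, rotate_append_length_eq]
  rfl

theorem formPerm_triple_inv {a b c : α} (h : [a, b, c].Nodup) :
    [a, b, c].formPerm⁻¹ = [a, c, b].formPerm := by
  rw [← formPerm_reverse, ← formPerm_rotate _ (nodup_reverse.2 h) 2]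
  rfl

/-- The two cycles share the path `c, l`, traversed in opposite directions, so it cancels and only
the transpositions at the ends survive. -/
theorem formPerm_cons_cons_mul_formPerm_cons_cons_reverse (a b c : α) (l : List α)
    (h : (b :: c :: l).Nodup) :
    (a :: c :: l).formPerm * (c :: b :: l.reverse).formPerm = [a, c, b].formPerm := by
  rw [formPerm_cons_cons_reverse b c l h, formPerm_cons_cons a, formPerm_cons_cons b, mul_inv_rev,
    mul_assoc, mul_inv_cancel_left, swap_inv, Equiv.swap_comm b c]
  rfl

end List

open List

theorem stmt5_general (m n : ℕ) (hm : 3 ≤ m)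
    (a₁ a₂ a₃ : ℕ) (ha : ([a₁, a₂, a₃] : List ℕ).Nodup)
    (hb : ∀ a ∈ ([a₁, a₂, a₃] : List ℕ), 1 ≤ a ∧ a ≤ n)
    (xs : List ℕ) (hxs : xs.Nodup) (hxl : xs.length = m - 2)
    (hout : ∀ x ∈ xs, n < x) :
    (([a₁, a₂, a₃] : List ℕ).formPerm)⁻¹ =
      (a₁ :: a₃ :: xs).formPerm * (a₃ :: a₂ :: xs.reverse).formPerm ∧
    (a₁ :: a₃ :: xs).length = m ∧ (a₃ :: a₂ :: xs.reverse).length = m ∧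
    (∃ x ∈ xs, (a₁ :: a₃ :: xs).formPerm x ≠ x) ∧
    (∃ x ∈ xs, (a₃ :: a₂ :: xs.reverse).formPerm x ≠ x) ∧
    (a₁ :: a₃ :: xs).toFinset ≠ (a₃ :: a₂ :: xs.reverse).toFinset := by
  have hall : ([a₁, a₂, a₃] ++ xs).Nodup :=
    nodup_append.2 ⟨ha, hxs, fun a ha x hx => ((hb a ha).2.trans_lt (hout x hx)).ne⟩
  have h₁ : (a₁ :: a₃ :: xs).Nodup := hall.sublist (by simp)
  have h₂ : (a₂ :: a₃ :: xs).Nodup := hall.sublist (by simp)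
  obtain ⟨x, hx⟩ : ∃ x, x ∈ xs := exists_mem_of_length_pos (by omega)
  refine ⟨?_, by simp; omega, by simp; omega, ⟨x, hx, ?_⟩, ⟨x, hx, ?_⟩, ?_⟩
  · rw [formPerm_triple_inv ha, formPerm_cons_cons_mul_formPerm_cons_cons_reverse _ _ _ _ h₂]
  · exact (formPerm_apply_mem_ne_self_iff _ h₁ x (by simp [hx])).2 (by simp)
  · rw [formPerm_cons_cons_reverse _ _ _ h₂, Ne, Perm.inv_eq_iff_eq, eq_comm]
    exact (formPerm_apply_mem_ne_self_iff _ h₂ x (by simp [hx])).2 (by simp)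
  · intro hsets
    have : a₁ ∈ (a₃ :: a₂ :: xs.reverse).toFinset := hsets ▸ by simp
    simp_all

theorem stmt5 (m n : ℕ) (hm : 3 ≤ m) (hn : m ≤ n)
    (a₁ a₂ a₃ : ℕ) (ha : ([a₁, a₂, a₃] : List ℕ).Nodup)
    (hb : ∀ a ∈ ([a₁, a₂, a₃] : List ℕ), 1 ≤ a ∧ a ≤ n)
    (xs : List ℕ) (hxs : xs.Nodup) (hxl : xs.length = m - 2)
    (hout : ∀ x ∈ xs, n < x) :
    (([a₁, a₂, a₃] : List ℕ).formPerm)⁻¹ =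
      (a₁ :: a₃ :: xs).formPerm * (a₃ :: a₂ :: xs.reverse).formPerm ∧
    (a₁ :: a₃ :: xs).length = m ∧ (a₃ :: a₂ :: xs.reverse).length = m ∧
    (∃ x ∈ xs, (a₁ :: a₃ :: xs).formPerm x ≠ x) ∧
    (∃ x ∈ xs, (a₃ :: a₂ :: xs.reverse).formPerm x ≠ x) ∧
    (a₁ :: a₃ :: xs).toFinset ≠ (a₃ :: a₂ :: xs.reverse).toFinset :=
  stmt5_general m n hm a₁ a₂ a₃ ha hb xs hxs hxl hout
end

section
/- For m, n ∈ ℕ with 3 ≤ m ≤ n, the subgroup of Sₙ generated by all m-cycles equals the alternating group Aₙ if and only if m is odd. -/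
open Equiv Equiv.Perm

theorem stmt7 (m n : ℕ) (hm : 3 ≤ m) (hmn : m ≤ n) :
    Subgroup.closure {p : Equiv.Perm (Fin n) | p.IsCycle ∧ p.support.card = m} =
      alternatingGroup (Fin n) ↔ Odd m := by
  set S : Set (Perm (Fin n)) := {p : Perm (Fin n) | p.IsCycle ∧ p.support.card = m} with hS
  -- existence of an m-cycle
  have hex : ∃ σ : Perm (Fin n), σ ∈ S := by
    set l : List (Fin n) := (List.finRange n).take m with hl
    have hnd : l.Nodup := (List.nodup_finRange n).sublist (List.take_sublist m _)
    have hlen : l.length = m := by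
      simp [hl, List.length_take, Nat.min_eq_left hmn]
    have h2 : 2 ≤ l.length := by omega
    refine ⟨l.formPerm, List.isCycle_formPerm hnd h2, ?_⟩
    rw [List.support_formPerm_of_nodup l hnd (by
      intro x hx; rw [hx] at hlen; simp at hlen; omega)]
    rw [List.toFinset_card_of_nodup hnd, hlen]
  constructor
  · intro h
    obtain ⟨σ, hσc, hσm⟩ := hex
    have hmem : σ ∈ alternatingGroup (Fin n) := by
      rw [← h]; exact Subgroup.subset_closure ⟨hσc, hσm⟩
    have hs : Perm.sign σ = 1 := mem_alternatingGroup.mp hmem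
    have hsgn := hσc.sign
    rw [hσm, hs] at hsgn
    by_contra hodd
    rw [Nat.not_odd_iff_even] at hodd
    rw [hodd.neg_one_pow] at hsgn
    exact (by norm_num : ((1 : ℤˣ) ≠ -1)) hsgn
  · intro hodd
    -- conjugation invariance of S
    have hconj : ∀ (g : Perm (Fin n)), ∀ p ∈ S, g * p * g⁻¹ ∈ S := by
      rintro g p ⟨hc, hcard⟩
      exact ⟨hc.conj, by rw [support_conj, Finset.card_map]; exact hcard⟩
    have hnormal : (Subgroup.closure S).Normal := by
      constructor
      intro x hx g
      induction hx using Subgroup.closure_induction with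
      | mem y hy => exact Subgroup.subset_closure (hconj g y hy)
      | one => simpa using (Subgroup.closure S).one_mem
      | mul y z _ _ hy hz =>
          have : g * (y * z) * g⁻¹ = (g * y * g⁻¹) * (g * z * g⁻¹) := by group
          rw [this]; exact mul_mem hy hz
      | inv y _ hy =>
          have : g * y⁻¹ * g⁻¹ = (g * y * g⁻¹)⁻¹ := by group
          rw [this]; exact inv_mem hy
    apply le_antisymm
    · rw [Subgroup.closure_le]
      rintro p ⟨hc, hcard⟩
      rw [SetLike.mem_coe, mem_alternatingGroup, hc.sign, hcard, hodd.neg_one_pow]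
      norm_num
    · -- find a three cycle in the closure
      obtain ⟨σ, hσc, hσm⟩ := hex
      obtain ⟨a, ha, -⟩ := id hσc
      have hsa : σ a ≠ a := ha
      have h2 : σ (σ a) ≠ a := by
        intro h
        have hsq : σ ^ 2 = 1 := (hσc.pow_eq_one_iff' hsa).mpr (by
          simp [pow_succ, pow_zero, h])
        have hdvd : orderOf σ ∣ 2 := orderOf_dvd_of_pow_eq_one hsq
        rw [hσc.orderOf, hσm] at hdvd
        have := Nat.le_of_dvd (by norm_num) hdvd
        omega
      have hσinv : σ⁻¹ ∈ S := ⟨hσc.inv, by rw [Perm.support_inv]; exact hσm⟩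
      set s : Perm (Fin n) := Equiv.swap a (σ a) with hsdef
      have hg : σ * (s * σ⁻¹ * s⁻¹) ∈ Subgroup.closure S :=
        mul_mem (Subgroup.subset_closure ⟨hσc, hσm⟩)
          (Subgroup.subset_closure (hconj s σ⁻¹ hσinv))
      have hgeq : σ * (s * σ⁻¹ * s⁻¹) =
          Equiv.swap (σ a) (σ (σ a)) * Equiv.swap (σ a) a := by
        have h1 : σ * (s * σ⁻¹ * s⁻¹) = (σ * Equiv.swap a (σ a) * σ⁻¹) * s⁻¹ := by
          rw [hsdef]; group
        rw [h1, ← swap_apply_apply, hsdef, Equiv.swap_inv, Equiv.swap_comm a (σ a)]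
      have hthree : IsThreeCycle (σ * (s * σ⁻¹ * s⁻¹)) := by
        rw [hgeq]
        exact isThreeCycle_swap_mul_swap_same
          (a := σ a) (b := σ (σ a)) (c := a)
          (fun h => hsa (σ.injective h).symm) hsa h2
      rw [← closure_three_cycles_eq_alternating, Subgroup.closure_le]
      intro τ hτ
      have hconjτ : IsConj (σ * (s * σ⁻¹ * s⁻¹)) τ :=
        isConj_of_cycleType_eq (by rw [hthree.cycleType, hτ.cycleType])
      obtain ⟨g, hgτ⟩ := isConj_iff.mp hconjτ
      rw [SetLike.mem_coe, ← hgτ]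
      exact hnormal.conj_mem _ hg g
end

section
/- Let m ≥ 4 be even. For distinct elements x, y, a₁, …, a_{m−2}, the product of the two m-cycles (y a₁ x a₂ a₃ ⋯ a_{m−2}) and (y x a₁ a₂ ⋯ a_{m−2}) equals the (m−1)-cycle (y a₂ a₄ ⋯ a_{m−2} a₁ a₃ ⋯ a_{m−3}). -/
/-!
Let `c = (y a₁ a₂ ⋯ a_{m-2})`. Inserting `x` right after `y`, resp. after `a₁`, gives the two
`m`-cycles `c * (y x)` and `c * (a₁ x)`. As `c` maps `y ↦ a₁` and fixes `x`, conjugation gives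
`(a₁ x) * c = c * (y x)`, so the product is `c²`. Since `c` has odd length `m - 1`, `c²` is again a
single cycle, running through the list of `c` with step `2`.
-/

namespace List

variable {α : Type*} [DecidableEq α]

theorem formPerm_map_perm_s9 (σ : Equiv.Perm α) :
    ∀ l : List α, (l.map σ).formPerm = σ * l.formPerm * σ⁻¹
  | [] => by simp
  | [_] => by simp
  | a :: b :: l => by
    rw [map_cons, map_cons, formPerm_cons_cons, ← map_cons, formPerm_map_perm_s9 σ (b :: l),
      formPerm_cons_cons, Equiv.swap_apply_apply]
    group

theorem formPerm_cons_cons_eq_mul_swap_s9 {p z : α} {l : List α} (hp : p ∉ l) (hz : z ∉ l) :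
    (p :: z :: l).formPerm = (p :: l).formPerm * Equiv.swap p z := by
  have hmap : z :: l = (p :: l).map (Equiv.swap p z) := by
    rw [map_cons, Equiv.swap_apply_left, map_congr_left fun w hw =>
      Equiv.swap_apply_of_ne_of_ne (ne_of_mem_of_not_mem hw hp) (ne_of_mem_of_not_mem hw hz),
      map_id']
  rw [formPerm_cons_cons, hmap, formPerm_map_perm_s9, Equiv.swap_inv, ← mul_assoc, ← mul_assoc,
    Equiv.swap_mul_self, one_mul]

theorem formPerm_append_cons_cons {l₁ l₂ : List α} {p z : α} (h : (l₁ ++ p :: z :: l₂).Nodup) :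
    (l₁ ++ p :: z :: l₂).formPerm = (l₁ ++ p :: l₂).formPerm * Equiv.swap p z := by
  have h' : (l₁ ++ p :: l₂).Nodup := h.sublist (by simp)
  have hrot : (p :: z :: (l₂ ++ l₁)).Nodup := by
    simpa using (nodup_rotate (n := l₁.length)).2 h
  rw [← formPerm_rotate _ h l₁.length, rotate_append_length_eq,
    ← formPerm_rotate _ h' l₁.length, rotate_append_length_eq]
  exact formPerm_cons_cons_eq_mul_swap_s9 (fun hp => (nodup_cons.1 hrot).1 (mem_cons_of_mem z hp))
    (nodup_cons.1 (nodup_cons.1 hrot).2).1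

theorem eq_formPerm_map_range {σ : Equiv.Perm α} {n : ℕ} {f : ℕ → α}
    (hf : ((range n).map f).Nodup) (hstep : ∀ i < n, σ (f i) = f ((i + 1) % n))
    (hfix : ∀ z ∉ (range n).map f, σ z = z) : σ = ((range n).map f).formPerm := by
  ext z
  by_cases hz : z ∈ (range n).map f
  · obtain ⟨i, hi, rfl⟩ : ∃ i < n, f i = z := by simpa using hz
    have hcycle := formPerm_apply_getElem _ hf i (by simpa using hi)
    simp only [getElem_map, getElem_range, length_map, length_range] at hcycle
    rw [hstep i hi, hcycle]
  · rw [hfix z hz, formPerm_apply_of_notMem hz]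

theorem formPerm_map_range_pow {n k : ℕ} {f : ℕ → α} (hf : ((range n).map f).Nodup)
    (hk : k.Coprime n) :
    ((range n).map f).formPerm ^ k = ((range n).map fun i => f (k * i % n)).formPerm := by
  have hinj : ∀ i < n, ∀ j < n, f i = f j → i = j := by
    simpa using (nodup_map_iff_inj_on nodup_range).1 hf
  have hsample : ((range n).map fun i => f (k * i % n)).Nodup := by
    refine (nodup_map_iff_inj_on nodup_range).2 fun i hi j hj hij => ?_
    simp only [mem_range] at hi hj
    have hn : 0 < n := by omega
    have hmod := hinj _ (Nat.mod_lt _ hn) _ (Nat.mod_lt _ hn) hij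
    have := Nat.ModEq.cancel_left_of_coprime (Nat.coprime_comm.1 hk) hmod
    rwa [Nat.ModEq, Nat.mod_eq_of_lt hi, Nat.mod_eq_of_lt hj] at this
  have hperm : ((range n).map fun i => f (k * i % n)).Perm ((range n).map f) := by
    refine (subperm_of_subset hsample fun z hz => ?_).perm_of_length_le (by simp)
    obtain ⟨i, hi, rfl⟩ : ∃ i < n, f (k * i % n) = z := by simpa using hz
    exact mem_map_of_mem (mem_range.2 (Nat.mod_lt _ (by omega)))
  refine eq_formPerm_map_range hsample (fun i hi => ?_) fun z hz => ?_
  · have hn : 0 < n := by omega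
    have hpow := formPerm_pow_apply_getElem _ hf k (k * i % n) (by simpa using Nat.mod_lt _ hn)
    simp only [getElem_map, getElem_range, length_map, length_range] at hpow
    rw [hpow, Nat.mod_add_mod, Nat.mul_mod, Nat.mod_mod, ← Nat.mul_mod, mul_add, mul_one]
  · exact Equiv.Perm.pow_apply_eq_self_of_apply_eq_self
      (formPerm_apply_of_notMem (hperm.mem_iff.not.1 hz)) k

theorem map_range_two_mul_mod {β : Type*} (d : ℕ) (g : ℕ → β) :
    (range (2 * d + 3)).map (fun i => g (2 * i % (2 * d + 3))) =
      g 0 :: ((range (d + 1)).map (fun i => g (2 * i + 2)) ++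
        (range (d + 1)).map (fun i => g (2 * i + 1))) := by
  rw [range_succ_eq_map, show 2 * d + 2 = (d + 1) + (d + 1) by ring, range_add]
  simp only [map_cons, map_append, map_map, Nat.mul_zero, Nat.zero_mod, cons.injEq,
    true_and]
  congr 1
  · refine map_congr_left fun i hi => ?_
    simp only [mem_range] at hi
    simp only [Function.comp_apply, Nat.succ_eq_add_one]
    rw [Nat.mod_eq_of_lt (by omega), mul_add, mul_one]
  · refine map_congr_left fun i hi => ?_
    simp only [Function.comp_apply, Nat.succ_eq_add_one]
    rw [show 2 * (d + 1 + i + 1) = 2 * i + 1 + (2 * d + 3) by ring, Nat.add_mod_right,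
      Nat.mod_eq_of_lt (by simp at hi; omega)]

end List

theorem Equiv.Perm.mul_swap_apply_mul_mul_swap {α : Type*} [DecidableEq α] (c : Equiv.Perm α)
    (x y : α) : c * Equiv.swap (c y) (c x) * (c * Equiv.swap y x) = c ^ 2 := by
  rw [Equiv.swap_apply_apply]
  simp only [mul_assoc, inv_mul_cancel_left, Equiv.swap_mul_self, mul_one, sq]

theorem formPerm_cons_map_range_sq {α : Type*} [DecidableEq α] (d : ℕ) (y : α) (a : ℕ → α)
    (hnd : (y :: (List.range (2 * d + 2)).map (fun i => a (i + 1))).Nodup) :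
    (y :: (List.range (2 * d + 2)).map (fun i => a (i + 1))).formPerm ^ 2 =
      (y :: ((List.range (d + 1)).map (fun i => a (2 * i + 2)) ++
        (List.range (d + 1)).map (fun i => a (2 * i + 1)))).formPerm := by
  set g : ℕ → α := fun j => if j = 0 then y else a j
  have hcycle : (List.range (2 * d + 3)).map g =
      y :: (List.range (2 * d + 2)).map (fun i => a (i + 1)) := by
    simp [List.range_succ_eq_map, g]
  rw [← hcycle] at hnd ⊢
  rw [List.formPerm_map_range_pow hnd (Nat.coprime_two_left.2 ⟨d + 1, by ring⟩),
    List.map_range_two_mul_mod]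
  simp [g]

theorem stmt9 (m : ℕ) (hm : 4 ≤ m) (heven : Even m)
    (x y : ℕ) (a : ℕ → ℕ)
    (hnd : (x :: y :: (List.range (m - 2)).map (fun i => a (i + 1))).Nodup) :
    (y :: a 1 :: x :: (List.range (m - 3)).map (fun i => a (i + 2))).formPerm *
      (y :: x :: (List.range (m - 2)).map (fun i => a (i + 1))).formPerm =
    (y :: ((List.range ((m - 2) / 2)).map (fun i => a (2 * i + 2)) ++
      (List.range ((m - 2) / 2)).map (fun i => a (2 * i + 1)))).formPerm := by
  obtain ⟨d, rfl⟩ : ∃ d, m = 2 * d + 4 := by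
    obtain ⟨k, hk⟩ := heven
    exact ⟨k - 2, by omega⟩
  rw [show 2 * d + 4 - 2 = 2 * d + 2 by omega] at hnd ⊢
  rw [show 2 * d + 4 - 3 = 2 * d + 1 by omega, show (2 * d + 2) / 2 = d + 1 by omega,
    ← formPerm_cons_map_range_sq d y a hnd.of_cons]
  set l := (List.range (2 * d + 2)).map (fun i => a (i + 1))
  set rest := (List.range (2 * d + 1)).map (fun i => a (i + 2))
  have hl : l = a 1 :: rest := by simp [List.range_succ_eq_map, l, rest]
  set c := (y :: l).formPerm with hc
  have hy : c y = a 1 := by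
    rw [hc, hl]
    exact List.formPerm_apply_head _ _ _ (hl ▸ hnd.of_cons)
  have hx : c x = x := List.formPerm_apply_of_notMem (List.nodup_cons.1 hnd).1
  have hL2 : (y :: x :: l).formPerm = c * Equiv.swap y x :=
    List.formPerm_append_cons_cons (l₁ := []) ((List.Perm.swap y x l).nodup_iff.1 hnd)
  have hL1 : (y :: a 1 :: x :: rest).formPerm = c * Equiv.swap (c y) (c x) := by
    rw [hy, hx, hc, hl]
    refine List.formPerm_append_cons_cons (l₁ := [y]) ?_
    rw [hl] at hnd
    simp only [List.nodup_cons, List.mem_cons, List.cons_append, List.nil_append] at hnd ⊢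
    grind
  rw [hL1, hL2, Equiv.Perm.mul_swap_apply_mul_mul_swap]
end

section
/- Let m ≥ 4 be even, n ≥ m, and σ ∈ Sₙ. Then with 3(m/2 − 1) outsiders added, σ⁻¹ can be written as a product of m-cycles in S_{n+3(m/2−1)}, each moving at least one outsider, with all m-cycles in the product having pairwise distinct supports. -/
/-!
Fix a set `s` of `m - 2` outsiders. If `π` is even and fixes `s`, pick `i` moved by `π`, put
`x = π i` and a third moved point `y`. Then `π = (y i)(x i) π'` where `π'` fixes `i` and every
point fixed by `π`, and `(y i)(x i) = c' c⁻¹` for the `m`-cycles `c = (x i s…)`, `c' = (y i s…)`.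
Inducting on the support, every cycle produced contains `s`, and the two new ones are told apart
from each other by `y` and from all later ones by `i`. An odd permutation is first multiplied by
an `m`-cycle (odd, as `m` is even) through one further outsider and `m - 1` old points; its support
misses `s`, so it differs from all the others.
-/

open Equiv Equiv.Perm Finset

section
variable {α : Type*} [DecidableEq α]

theorem Equiv.Perm.formPerm_cons_cons_mul_inv (x y i : α) (l : List α) :
    (y :: i :: l).formPerm * (x :: i :: l).formPerm⁻¹ = swap y i * swap x i := by
  rw [List.formPerm_cons_cons, List.formPerm_cons_cons, mul_inv_rev, swap_inv]
  group

variable [Fintype α]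

theorem List.Nodup.support_formPerm_of_two_le_length {l : List α} (hl : l.Nodup)
    (h2 : 2 ≤ l.length) : l.formPerm.support = l.toFinset :=
  List.support_formPerm_of_nodup _ hl fun x hx => by simp [hx] at h2

theorem Finset.exists_isCycle_support_eq {s : Finset α} (hs : 2 ≤ #s) :
    ∃ c : Perm α, c.IsCycle ∧ c.support = s := by
  have h2 : 2 ≤ s.toList.length := by rwa [length_toList]
  exact ⟨s.toList.formPerm, List.isCycle_formPerm s.nodup_toList h2, by
    rw [s.nodup_toList.support_formPerm_of_two_le_length h2, toList_toFinset]⟩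

theorem Equiv.Perm.isCycle_formPerm_cons_cons_toList {a b : α} {s : Finset α}
    (hab : a ≠ b) (ha : a ∉ s) (hb : b ∉ s) :
    (a :: b :: s.toList).formPerm.IsCycle ∧
      (a :: b :: s.toList).formPerm.support = insert a (insert b s) ∧
      #(a :: b :: s.toList).formPerm.support = #s + 2 := by
  have hnd : (a :: b :: s.toList).Nodup := by simp [hab, ha, hb, s.nodup_toList]
  have h2 : 2 ≤ (a :: b :: s.toList).length := by simp
  rw [hnd.support_formPerm_of_two_le_length h2, List.toFinset_card_of_nodup hnd]
  exact ⟨List.isCycle_formPerm hnd h2, by simp, by simp⟩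

theorem Equiv.Perm.three_le_card_support_of_sign_eq_one {π : Perm α} (h1 : π ≠ 1)
    (hsign : sign π = 1) : 3 ≤ #π.support := by
  by_contra h
  have h2 : #π.support = 2 := by have := one_lt_card_support_of_ne_one h1; omega
  rw [(card_support_eq_two.mp h2).sign_eq] at hsign
  exact absurd hsign (by decide)

theorem Equiv.Perm.support_swap_mul_swap_mul_subset {π : Perm α} {i y : α}
    (hi : i ∈ π.support) (hy : y ∈ π.support) (hyx : y ≠ π i) :
    (swap (π i) i * swap y i * π).support ⊆ π.support.erase i := by
  intro z hz
  refine mem_erase.mpr ⟨fun hzi => mem_support.mp hz ?_, ?_⟩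
  · have hxi : π i ≠ i := mem_support.mp hi
    simp [hzi, swap_apply_of_ne_of_ne hyx.symm hxi]
  · by_contra hzπ
    have hzi : z ≠ i := fun h => hzπ (h ▸ hi)
    have hzy : z ≠ y := fun h => hzπ (h ▸ hy)
    have hzx : z ≠ π i := fun h => hzπ (h ▸ apply_mem_support.mpr hi)
    refine mem_support.mp hz ?_
    simp [notMem_support.mp hzπ, swap_apply_of_ne_of_ne hzy hzi, swap_apply_of_ne_of_ne hzx hzi]

theorem Equiv.Perm.exists_support_swap_mul_swap_mul_subset_erase {π : Perm α} (h1 : π ≠ 1)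
    (hsign : sign π = 1) :
    ∃ i ∈ π.support, ∃ y ∈ π.support, y ≠ i ∧ y ≠ π i ∧
      (swap (π i) i * swap y i * π).support ⊆ π.support.erase i := by
  obtain ⟨i, hi⟩ := card_pos.mp (one_lt_card_support_of_ne_one h1).le
  obtain ⟨y, hy, hyix⟩ := exists_mem_notMem_of_card_lt_card (s := {i, π i}) (t := π.support)
    (card_le_two.trans_lt (three_le_card_support_of_sign_eq_one h1 hsign))
  simp only [mem_insert, mem_singleton, not_or] at hyix
  exact ⟨i, hi, y, hy, hyix.1, hyix.2, support_swap_mul_swap_mul_subset hi hy hyix.2⟩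

theorem Equiv.Perm.exists_isCycle_mul_inv_eq_swap_mul_swap (s : Finset α) {x y i : α}
    (hxi : x ≠ i) (hyi : y ≠ i) (hyx : y ≠ x) (hx : x ∉ s) (hy : y ∉ s) (hi : i ∉ s) :
    ∃ c c' : Perm α, c' * c⁻¹ = swap y i * swap x i ∧ c'.support ≠ c⁻¹.support ∧
      ∀ d ∈ [c', c⁻¹], d.IsCycle ∧ #d.support = #s + 2 ∧ s ⊆ d.support ∧
        d.support ⊆ insert x (insert y (insert i s)) ∧ i ∈ d.support := by
  obtain ⟨hc, hcsupp, hccard⟩ := isCycle_formPerm_cons_cons_toList hxi hx hi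
  obtain ⟨hc', hc'supp, hc'card⟩ := isCycle_formPerm_cons_cons_toList hyi hy hi
  refine ⟨_, _, formPerm_cons_cons_mul_inv x y i s.toList, ?_, ?_⟩
  · rw [support_inv, hc'supp, hcsupp]
    intro h
    have hy' : y ∈ insert x (insert i s) := h ▸ mem_insert_self _ _
    simp [hyx, hyi, hy] at hy'
  · simp only [List.mem_cons, List.not_mem_nil, or_false]
    rintro d (rfl | rfl)
    · exact ⟨hc', hc'card, by grind, by grind, by grind⟩
    · rw [support_inv]
      exact ⟨hc.inv, hccard, by grind, by grind, by grind⟩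

theorem Equiv.Perm.exists_cycles_through_prod_eq_of_sign_eq_one (s : Finset α) {π : Perm α}
    (hsign : sign π = 1) (hπs : _root_.Disjoint π.support s) :
    ∃ cs : List (Perm α), π = cs.prod ∧
      (∀ c ∈ cs, c.IsCycle ∧ #c.support = #s + 2 ∧ s ⊆ c.support ∧ c.support ⊆ π.support ∪ s) ∧
      cs.Pairwise (fun c d => c.support ≠ d.support) := by
  induction hk : #π.support using Nat.strong_induction_on generalizing π with
  | _ k ih =>
  subst hk
  by_cases h1 : π = 1
  · exact ⟨[], by simp [h1], by simp, .nil⟩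
  obtain ⟨i, hi, y, hys, hyi, hyx, hsub⟩ := exists_support_swap_mul_swap_mul_subset_erase h1 hsign
  set x := π i
  have hxs : x ∈ π.support := apply_mem_support.mpr hi
  have hxi : x ≠ i := mem_support.mp hi
  set π' := swap x i * swap y i * π with hπ'
  obtain ⟨cs, hprod, hcs, hpair⟩ := ih #π'.support
    ((card_le_card hsub).trans_lt (card_erase_lt_of_mem hi))
    (by simp [hπ', sign_swap hxi, sign_swap hyi, hsign])
    (hπs.mono_left (hsub.trans (erase_subset _ _))) rfl
  have hnot : ∀ a ∈ π.support, a ∉ s := fun a ha => disjoint_left.mp hπs ha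
  obtain ⟨c, c', hcc', hne, hnew⟩ := exists_isCycle_mul_inv_eq_swap_mul_swap s hxi hyi hyx
    (hnot x hxs) (hnot y hys) (hnot i hi)
  have hi_old : ∀ d ∈ cs, i ∉ d.support := fun d hd hid => by
    rcases mem_union.mp ((hcs d hd).2.2.2 hid) with h | h
    · exact notMem_erase i _ (hsub h)
    · exact hnot i hi h
  refine ⟨c' :: c⁻¹ :: cs, ?_, fun d hd => ?_, ?_⟩
  · rw [List.prod_cons, List.prod_cons, ← hprod, ← mul_assoc, hcc', hπ']
    simp [← mul_assoc]
  · rcases (List.mem_append (s := [c', c⁻¹])).mp hd with hd | hd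
    · obtain ⟨hdc, hdcard, hsd, hdsupp, -⟩ := hnew d hd
      exact ⟨hdc, hdcard, hsd, hdsupp.trans (by simp [insert_subset_iff, hxs, hys, hi])⟩
    · obtain ⟨hdc, hdcard, hsd, hdπ⟩ := hcs d hd
      exact ⟨hdc, hdcard, hsd, hdπ.trans (union_subset_union_left (hsub.trans (erase_subset _ _)))⟩
  · have hi_new : ∀ e ∈ [c', c⁻¹], ∀ d ∈ cs, e.support ≠ d.support := fun e he d hd h =>
      hi_old d hd (h ▸ (hnew e he).2.2.2.2)
    refine .cons (fun d hd => ?_) (.cons (hi_new _ (by simp)) hpair)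
    rcases List.mem_cons.mp hd with rfl | hd
    · exact hne
    · exact hi_new _ (by simp) d hd

theorem Equiv.Perm.exists_cycles_prod_eq (s K : Finset α) (hs : s.Nonempty) (hs_even : Even #s)
    (hK : #K = #s + 2) (hsK : _root_.Disjoint s K) {π : Perm α}
    (hπs : _root_.Disjoint π.support s) :
    ∃ cs : List (Perm α), π = cs.prod ∧
      (∀ c ∈ cs, c.IsCycle ∧ #c.support = #s + 2 ∧ (s ⊆ c.support ∨ c.support = K)) ∧
      cs.Pairwise (fun c d => c.support ≠ d.support) := by
  rcases Int.units_eq_one_or (sign π) with hsign | hsign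
  · obtain ⟨cs, hprod, hcs, hpair⟩ := exists_cycles_through_prod_eq_of_sign_eq_one s hsign hπs
    exact ⟨cs, hprod, fun c hc => ⟨(hcs c hc).1, (hcs c hc).2.1, .inl (hcs c hc).2.2.1⟩, hpair⟩
  obtain ⟨c₀, hc₀, hc₀K⟩ := exists_isCycle_support_eq (s := K) (by omega)
  have hsign₀ : sign c₀ = -1 := by rw [hc₀.sign, hc₀K, hK, (hs_even.add even_two).neg_one_pow]
  have hsub : (c₀⁻¹ * π).support ⊆ K ∪ π.support := by
    simpa [support_inv, hc₀K] using support_mul_le c₀⁻¹ π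
  obtain ⟨cs, hprod, hcs, hpair⟩ := exists_cycles_through_prod_eq_of_sign_eq_one s
    (π := c₀⁻¹ * π) (by simp [hsign₀, hsign])
    (disjoint_of_subset_left hsub (disjoint_union_left.mpr ⟨hsK.symm, hπs⟩))
  have hne : ∀ c ∈ cs, c.support ≠ K := fun c hc hcK => by
    obtain ⟨a, ha⟩ := hs
    exact disjoint_left.mp hsK ha (hcK ▸ (hcs c hc).2.2.1 ha)
  refine ⟨c₀ :: cs, by rw [List.prod_cons, ← hprod, mul_inv_cancel_left], ?_, ?_⟩
  · intro c hc
    rcases List.mem_cons.mp hc with rfl | hc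
    · exact ⟨hc₀, hc₀K ▸ hK, .inr hc₀K⟩
    · exact ⟨(hcs c hc).1, (hcs c hc).2.1, .inl (hcs c hc).2.2.1⟩
  · exact .cons (fun c hc h => hne c hc (h ▸ hc₀K)) hpair

end

theorem stmt12 (m n : ℕ) (hm : 4 ≤ m) (heven : Even m) (hmn : m ≤ n)
    (σ : Equiv.Perm (Fin (n + 3 * (m / 2 - 1))))
    (hfix : ∀ i : Fin (n + 3 * (m / 2 - 1)), n ≤ i.val → σ i = i) :
    ∃ cs : List (Equiv.Perm (Fin (n + 3 * (m / 2 - 1)))),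
      σ⁻¹ = cs.prod ∧
      (∀ c ∈ cs, c.IsCycle ∧ c.support.card = m ∧
        ∃ i : Fin (n + 3 * (m / 2 - 1)), n ≤ i.val ∧ c i ≠ i) ∧
      cs.Pairwise (fun c d => c.support ≠ d.support) := by
  have hm2 : m % 2 = 0 := Nat.even_iff.mp heven
  set s := (Ico n (n + (m - 2))).attachFin (n := n + 3 * (m / 2 - 1))
    (fun k hk => by simp only [mem_Ico] at hk; omega)
  set K := (insert (n + (m - 2)) (range (m - 1))).attachFin (n := n + 3 * (m / 2 - 1))
    (fun k hk => by simp only [mem_insert, mem_range] at hk; omega)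
  have hs : #s = m - 2 := by simp [s, card_attachFin]
  have hK : #K = m := by
    rw [card_attachFin, card_insert_of_notMem (by simp; omega), card_range]; omega
  have hsK : _root_.Disjoint s K :=
    disjoint_left.mpr fun a ha haK => by simp [s, K, mem_attachFin] at ha haK; omega
  have hσs : _root_.Disjoint σ⁻¹.support s := disjoint_right.mpr fun a ha => by
    simp only [s, mem_attachFin, mem_Ico] at ha
    simp [hfix a ha.1]
  obtain ⟨cs, hprod, hcs, hpair⟩ := exists_cycles_prod_eq s K ⟨⟨n, by omega⟩, by simp [s]; omega⟩
    (by rw [hs]; exact (Nat.even_sub (by omega)).mpr (by simp [heven])) (by omega) hsK hσs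
  refine ⟨cs, hprod, fun c hc => ?_, hpair⟩
  obtain ⟨hcyc, hcard, hsc | hKc⟩ := hcs c hc
  · exact ⟨hcyc, by omega, ⟨n, by omega⟩, le_rfl, mem_support.mp (hsc (by simp [s]; omega))⟩
  · exact ⟨hcyc, by omega, ⟨n + (m - 2), by omega⟩, by simp, mem_support.mp (by simp [hKc, K])⟩
end

section
/- Let σ ∈ Aₙ be a product of r pairwise disjoint cycles of lengths k₁,…,k_r (each kᵢ ≥ 2) with k₁ + ⋯ + k_r = n. Then σ⁻¹ can be written as a product of exactly (n+r)/2 three-cycles in S_{n+1}, each containing the outsider x = n+1. -/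
/-!
A cycle `(a₀ a₁ … a_{k-1})` avoiding `x` is the product `(x a₀)(x a_{k-1})⋯(x a₁)(x a₀)` of
`k + 1` transpositions through `x`, and neighbouring factors involve distinct points.
Concatenating these words over the disjoint cycles of `σ⁻¹` gives a word of `n + r` such
transpositions, still with distinct neighbours since the cycles have disjoint supports. As `σ` is
even, `n + r` is even, and each neighbouring pair `(x a)(x b)` with `a ≠ b` is a three-cycle
moving `x`.
-/

open Equiv Equiv.Perm

variable {α : Type*}

theorem List.isChain_ne_cons_reverse {a : α} {l : List α} (h : (a :: l).Nodup) (hl : l ≠ []) :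
    (a :: (a :: l).reverse).IsChain (· ≠ ·) := by
  obtain ⟨c, l, rfl⟩ := exists_cons_of_ne_nil hl
  rw [isChain_cons, head?_reverse, getLast?_cons_cons]
  refine ⟨fun b hb => ?_, (nodup_reverse.2 h).isChain⟩
  rintro rfl
  exact (nodup_cons.1 h).1 (mem_of_mem_getLast? hb)

variable [DecidableEq α]

theorem List.formPerm_map (f : Equiv.Perm α) :
    ∀ l : List α, (l.map f).formPerm = f * l.formPerm * f⁻¹
  | [] => by simp
  | [a] => by simp
  | a :: b :: l => by
    have ih := formPerm_map f (b :: l)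
    rw [map_cons] at ih
    rw [map_cons, map_cons, formPerm_cons_cons, formPerm_cons_cons, ih, Equiv.swap_apply_apply]
    group

theorem List.formPerm_cons_eq_prod_map_swap {x : α} {l : List α} (h : (x :: l).Nodup) :
    formPerm (x :: l) = (l.reverse.map (Equiv.swap x)).prod := by
  induction l with
  | nil => simp
  | cons b l ih =>
    have hxl : x ∉ l := fun hx => (nodup_cons.1 h).1 (mem_cons_of_mem b hx)
    have hbl : b ∉ l := (nodup_cons.1 (nodup_cons.1 h).2).1
    have hconj : formPerm (b :: l) = Equiv.swap x b * formPerm (x :: l) * Equiv.swap x b := by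
      have hmap : (x :: l).map (Equiv.swap x b) = b :: l := by
        rw [map_cons, Equiv.swap_apply_left, map_congr_left (g := id) fun y hy => ?_, map_id]
        exact Equiv.swap_apply_of_ne_of_ne (ne_of_mem_of_not_mem hy hxl)
          (ne_of_mem_of_not_mem hy hbl)
      rw [← hmap, formPerm_map, Equiv.swap_inv]
    rw [formPerm_cons_cons, hconj, mul_assoc, Equiv.swap_mul_self_mul,
      ih (h.sublist (by simp))]
    simp

theorem List.formPerm_eq_prod_map_swap_of_notMem {x a : α} {l : List α} (h : (a :: l).Nodup)
    (hx : x ∉ a :: l) :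
    formPerm (a :: l) = ((a :: (a :: l).reverse).map (Equiv.swap x)).prod := by
  rw [map_cons, prod_cons, ← formPerm_cons_eq_prod_map_swap (nodup_cons.2 ⟨hx, h⟩),
    formPerm_cons_cons, Equiv.swap_mul_self_mul]

namespace Equiv.Perm

variable [Fintype α]

theorem IsCycle.exists_prod_map_swap_eq {c : Perm α} (hc : c.IsCycle) {x : α}
    (hx : x ∉ c.support) :
    ∃ L : List α, (∀ a ∈ L, a ∈ c.support) ∧ L.IsChain (· ≠ ·) ∧
      L.length = c.support.card + 1 ∧ (L.map (swap x)).prod = c := by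
  obtain ⟨a, ha⟩ := hc.nonempty_support
  have hmem : ∀ y ∈ c.toList a, y ∈ c.support := fun y hy =>
    ((mem_toList_iff.1 hy).1.mem_support_iff).1 (mem_toList_iff.1 hy).2
  have hlen : (c.toList a).length = c.support.card := by
    rw [length_toList, hc.cycleOf_eq (mem_support.1 ha)]
  have hform : (c.toList a).formPerm = c := by
    rw [formPerm_toList, hc.cycleOf_eq (mem_support.1 ha)]
  have htwo : 2 ≤ (c.toList a).length := two_le_length_toList_iff_mem_support.2 ha
  have hne : c.toList a ≠ [] := List.ne_nil_of_length_pos (by lia)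
  obtain ⟨a₀, l, hl⟩ := List.exists_cons_of_ne_nil hne
  rw [hl] at hmem hlen hform htwo
  have hnodup : (a₀ :: l).Nodup := hl ▸ nodup_toList c a
  have hx' : x ∉ a₀ :: l := fun h => hx (hmem x h)
  refine ⟨a₀ :: (a₀ :: l).reverse, ?_, ?_, ?_, ?_⟩
  · rintro y (_ | ⟨_, hy⟩)
    exacts [hmem a₀ List.mem_cons_self, hmem y (List.mem_reverse.1 hy)]
  · refine List.isChain_ne_cons_reverse hnodup (List.ne_nil_of_length_pos ?_)
    simp only [List.length_cons] at htwo
    lia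
  · simpa using hlen
  · rw [← List.formPerm_eq_prod_map_swap_of_notMem hnodup hx', hform]

theorem exists_prod_map_swap_eq (τ : Perm α) {x : α} (hx : x ∉ τ.support) :
    ∃ L : List α, (∀ a ∈ L, a ∈ τ.support) ∧ L.IsChain (· ≠ ·) ∧
      L.length = τ.support.card + τ.cycleType.card ∧ (L.map (swap x)).prod = τ := by
  induction τ using cycle_induction_on with
  | base_one => exact ⟨[], by simp, .nil, by simp, by simp⟩
  | base_cycles c hc =>
    obtain ⟨L, hmem, hchain, hlen, hprod⟩ := hc.exists_prod_map_swap_eq hx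
    exact ⟨L, hmem, hchain, by rw [hlen, hc.cycleType]; simp, hprod⟩
  | induction_disjoint σ τ hd _ ihσ ihτ =>
    rw [hd.support_mul, Finset.mem_union, not_or] at hx
    obtain ⟨Lσ, hmemσ, hchainσ, hlenσ, hprodσ⟩ := ihσ hx.1
    obtain ⟨Lτ, hmemτ, hchainτ, hlenτ, hprodτ⟩ := ihτ hx.2
    refine ⟨Lσ ++ Lτ, ?_, ?_, ?_, ?_⟩
    · intro a ha
      rw [hd.support_mul, Finset.mem_union]
      exact (List.mem_append.1 ha).imp (hmemσ a) (hmemτ a)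
    · refine List.isChain_append.2 ⟨hchainσ, hchainτ, fun a ha b hb hab => ?_⟩
      exact Finset.disjoint_left.1 (disjoint_iff_disjoint_support.1 hd)
        (hmemσ a (List.mem_of_mem_getLast? ha)) (hab ▸ hmemτ b (List.mem_of_mem_head? hb))
    · rw [List.length_append, hlenσ, hlenτ, hd.card_support_mul, hd.cycleType_mul,
        Multiset.card_add]
      ring
    · rw [List.map_append, List.prod_append, hprodσ, hprodτ]

theorem even_card_support_add_card_cycleType {σ : Perm α} (hσ : sign σ = 1) :
    Even (σ.support.card + σ.cycleType.card) := by
  rw [← sum_cycleType, ← neg_one_pow_eq_one_iff_even (R := ℤˣ) (by decide), ← sign_of_cycleType,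
    hσ]

end Equiv.Perm

theorem List.exists_isThreeCycle_prod_eq_prod_map_swap [Fintype α] (x : α) :
    ∀ L : List α, x ∉ L → L.IsChain (· ≠ ·) → Even L.length →
      ∃ cs : List (Equiv.Perm α), cs.prod = (L.map (Equiv.swap x)).prod ∧
        cs.length = L.length / 2 ∧ ∀ c ∈ cs, c.IsThreeCycle ∧ x ∈ c.support
  | [] => fun _ _ _ => ⟨[], by simp, by simp, by simp⟩
  | [_] => fun _ _ h => absurd h Nat.not_even_one
  | a :: b :: L => fun hx hchain heven => by
    obtain ⟨hxa, hxb, hxL⟩ : x ≠ a ∧ x ≠ b ∧ x ∉ L := by simpa using hx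
    obtain ⟨hab, hchain⟩ := isChain_cons_cons.1 hchain
    obtain ⟨cs, hprod, hlen, hcs⟩ := exists_isThreeCycle_prod_eq_prod_map_swap x L hxL
      hchain.tail (by simpa [parity_simps] using heven)
    refine ⟨(Equiv.swap x a * Equiv.swap x b) :: cs, ?_, ?_, ?_⟩
    · rw [prod_cons, hprod]
      simp [mul_assoc]
    · simp only [length_cons, hlen]
      lia
    · rintro c (_ | ⟨_, hc⟩)
      · refine ⟨Equiv.Perm.isThreeCycle_swap_mul_swap_same hxa hxb hab, ?_⟩
        simp [Equiv.swap_apply_of_ne_of_ne hxb.symm hab.symm, hxb.symm]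
      · exact hcs c hc

theorem stmt16 (n r : ℕ) (σ : Equiv.Perm (Fin (n + 1)))
    (hfix : σ (Fin.last n) = Fin.last n)
    (hsign : Equiv.Perm.sign σ = 1)
    (hsupp : σ.support.card = n)
    (hcyc : σ.cycleType.card = r) :
    ∃ cs : List (Equiv.Perm (Fin (n + 1))),
      cs.prod = σ⁻¹ ∧ cs.length = (n + r) / 2 ∧
      ∀ c ∈ cs, c.IsCycle ∧ c.support.card = 3 ∧ Fin.last n ∈ c.support := by
  have hx : Fin.last n ∉ σ⁻¹.support := by
    rwa [support_inv, notMem_support]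
  obtain ⟨L, hmem, hchain, hlen, hprod⟩ := σ⁻¹.exists_prod_map_swap_eq hx
  rw [support_inv, cycleType_inv, hsupp, hcyc] at hlen
  have heven : Even L.length := by
    rw [hlen, ← hsupp, ← hcyc]
    exact even_card_support_add_card_cycleType hsign
  obtain ⟨cs, hcs, hcslen, hthree⟩ := L.exists_isThreeCycle_prod_eq_prod_map_swap (Fin.last n)
    (fun h => hx (hmem _ h)) hchain heven
  refine ⟨cs, hcs.trans hprod, by rw [hcslen, hlen], fun c hc => ?_⟩
  obtain ⟨hc3, hxc⟩ := hthree c hc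
  exact ⟨hc3.isCycle, hc3.card_support, hxc⟩
end

section
/- Let σ ∈ Sₙ be a product of r pairwise disjoint cycles of lengths k₁,…,k_r (each kᵢ ≥ 2) with k₁ + ⋯ + k_r = n. For any d ≥ 1, if σ⁻¹ is written as a product of 3-cycles in S_{n+d}, each moving at least one of the d outsiders, then the number of 3-cycles in the product is at least (n+r)/2. -/
/-!
Write each 3-cycle moving an outsider `x` as a product of two transpositions `swap _ x`, and
track the potential `2 · #(points moved outside the outsiders) + #(orbits)`. Right
multiplication by such a transposition raises it by at most one: merging two orbits loses an
orbit and moves at most one new non-outsider, while splitting an orbit (one more orbit) moves no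
new point, since both transposed points already lie on a nontrivial orbit. The potential is
`n + d` at the identity and `2n + r + d` at `σ⁻¹`, so a product of `ℓ` such 3-cycles equal to
`σ⁻¹` has `2n + r + d ≤ n + d + 2ℓ`.
-/

open Equiv Finset

namespace Equiv.Perm

theorem sameCycle_iff_exists_pow_apply_eq {α : Type*} [Finite α] {π : Perm α} {y z : α} :
    π.SameCycle y z ↔ ∃ k : ℕ, (π ^ k) y = z := by
  refine ⟨SameCycle.exists_nat_pow_eq, ?_⟩
  rintro ⟨k, rfl⟩
  exact (SameCycle.refl _ _).pow_right

section MulSwapPow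

variable {α : Type*} [DecidableEq α] {π : Perm α} {a x y : α}

theorem mul_swap_pow_apply_of_forall_lt {k : ℕ} (h : ∀ i < k, (π ^ i) y ≠ a ∧ (π ^ i) y ≠ x) :
    ((π * swap a x) ^ k) y = (π ^ k) y := by
  induction k with
  | zero => rfl
  | succ k ih =>
    obtain ⟨hka, hkx⟩ := h k k.lt_succ_self
    rw [pow_succ', pow_succ', mul_apply, mul_apply, mul_apply,
      ih fun i hi => h i (hi.trans k.lt_succ_self), swap_apply_of_ne_of_ne hka hkx]

theorem exists_mul_swap_pow_apply_eq_pow_apply_mem_pair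
    (h : ∃ k : ℕ, (π ^ k) y = a ∨ (π ^ k) y = x) :
    ∃ k : ℕ, ((π * swap a x) ^ k) y = (π ^ k) y ∧ ((π ^ k) y = a ∨ (π ^ k) y = x) := by
  classical
  refine ⟨Nat.find h, mul_swap_pow_apply_of_forall_lt fun i hi => ?_, Nat.find_spec h⟩
  exact not_or.1 (Nat.find_min h hi)

end MulSwapPow

variable {α : Type*} [Fintype α] [DecidableEq α]

def orbitFinset (π : Perm α) (y : α) : Finset α := univ.filter (π.SameCycle y)

theorem mem_orbitFinset {π : Perm α} {y z : α} : z ∈ π.orbitFinset y ↔ π.SameCycle y z := by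
  simp [orbitFinset]

theorem orbitFinset_eq_iff {π : Perm α} {y z : α} :
    π.orbitFinset y = π.orbitFinset z ↔ π.SameCycle y z := by
  refine ⟨fun h => mem_orbitFinset.1 (h ▸ mem_orbitFinset.2 (SameCycle.refl _ _)), fun h => ?_⟩
  ext w
  simp only [mem_orbitFinset]
  exact ⟨h.symm.trans, h.trans⟩

theorem orbitFinset_eq_support_cycleOf {π : Perm α} {y : α} (hy : y ∈ π.support) :
    π.orbitFinset y = (π.cycleOf y).support := by
  ext z
  rw [mem_orbitFinset, mem_support_cycleOf_iff]
  simp [hy]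

def numOrbits (π : Perm α) : ℕ := #(univ.image π.orbitFinset)

theorem card_image_orbitFinset_support (π : Perm α) :
    #(π.support.image π.orbitFinset) = #π.cycleFactorsFinset := by
  have hcycleOf {c : Perm α} (hc : c ∈ π.cycleFactorsFinset) {y : α} (hy : y ∈ c.support) :
      y ∈ π.support ∧ c = π.cycleOf y :=
    ⟨mem_cycleFactorsFinset_support_le hc hy, cycle_is_cycleOf hy hc⟩
  refine (card_bij (fun c _ => c.support) (fun c hc => ?_) (fun c₁ hc₁ c₂ hc₂ h => ?_)
    (fun T hT => ?_)).symm
  · obtain ⟨y, hy⟩ := (mem_cycleFactorsFinset_iff.1 hc).1.nonempty_support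
    obtain ⟨hyπ, rfl⟩ := hcycleOf hc hy
    exact mem_image.2 ⟨y, hyπ, orbitFinset_eq_support_cycleOf hyπ⟩
  · obtain ⟨y, hy⟩ := (mem_cycleFactorsFinset_iff.1 hc₁).1.nonempty_support
    rw [(hcycleOf hc₁ hy).2, (hcycleOf hc₂ (h ▸ hy)).2]
  · obtain ⟨y, hy, rfl⟩ := mem_image.1 hT
    exact ⟨π.cycleOf y, cycleOf_mem_cycleFactorsFinset_iff.2 hy,
      (orbitFinset_eq_support_cycleOf hy).symm⟩

theorem numOrbits_eq (π : Perm α) : π.numOrbits = π.cycleType.card + #π.supportᶜ := by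
  have hfixed : Set.InjOn π.orbitFinset ↑(π.supportᶜ) := fun y hy z _ h =>
    (orbitFinset_eq_iff.1 h).eq_of_left (notMem_support.1 (mem_compl.1 hy))
  have hdisj :
      _root_.Disjoint (π.support.image π.orbitFinset) (π.supportᶜ.image π.orbitFinset) := by
    refine disjoint_left.2 fun T hT hT' => ?_
    obtain ⟨y, hy, rfl⟩ := mem_image.1 hT
    obtain ⟨z, hz, hzy⟩ := mem_image.1 hT'
    exact mem_compl.1 hz ((orbitFinset_eq_iff.1 hzy).mem_support_iff.2 hy)
  rw [numOrbits, ← union_compl π.support, image_union, card_union_of_disjoint hdisj,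
    card_image_of_injOn hfixed, card_image_orbitFinset_support, cycleType_def,
    Multiset.card_map, card_val]

theorem numOrbits_one : (1 : Perm α).numOrbits = Fintype.card α := by
  simp [numOrbits_eq]

section MulSwap

variable {π : Perm α} {a x y : α}

theorem sameCycle_mul_swap_iff_of_not_sameCycle (ha : ¬π.SameCycle y a)
    (hx : ¬π.SameCycle y x) {z : α} : (π * swap a x).SameCycle y z ↔ π.SameCycle y z := by
  have hpow (k : ℕ) : ((π * swap a x) ^ k) y = (π ^ k) y :=
    mul_swap_pow_apply_of_forall_lt fun i _ =>
      ⟨fun h => ha (h ▸ (SameCycle.refl _ _).pow_right),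
        fun h => hx (h ▸ (SameCycle.refl _ _).pow_right)⟩
  simp only [sameCycle_iff_exists_pow_apply_eq, hpow]

theorem SameCycle.mul_swap_left_or_right (h : π.SameCycle y a) :
    (π * swap a x).SameCycle y a ∨ (π * swap a x).SameCycle y x := by
  obtain ⟨k, hk⟩ := sameCycle_iff_exists_pow_apply_eq.1 h
  obtain ⟨m, hm, hma | hmx⟩ := exists_mul_swap_pow_apply_eq_pow_apply_mem_pair ⟨k, Or.inl hk⟩
  · exact .inl (sameCycle_iff_exists_pow_apply_eq.2 ⟨m, hm.trans hma⟩)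
  · exact .inr (sameCycle_iff_exists_pow_apply_eq.2 ⟨m, hm.trans hmx⟩)

theorem sameCycle_mul_swap_of_not_sameCycle (h : ¬π.SameCycle a x) :
    (π * swap a x).SameCycle a x := by
  obtain ⟨k, hk⟩ :=
    sameCycle_iff_exists_pow_apply_eq.1 (sameCycle_apply_left.2 (SameCycle.refl π a))
  obtain ⟨m, hm, hma | hmx⟩ :=
    exists_mul_swap_pow_apply_eq_pow_apply_mem_pair (a := a) (x := x) ⟨k, Or.inl hk⟩
  · have hx : (π * swap a x).SameCycle ((π * swap a x) x) a :=
      sameCycle_iff_exists_pow_apply_eq.2 ⟨m, by simpa using hm.trans hma⟩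
    exact (sameCycle_apply_left.1 hx).symm
  · exact absurd (hmx ▸ (sameCycle_apply_right.2 (SameCycle.refl π a)).pow_right) h

theorem image_orbitFinset_mul_swap_subset :
    univ.image (π * swap a x).orbitFinset ⊆
      (univ.image π.orbitFinset \ {π.orbitFinset a, π.orbitFinset x}) ∪
        {(π * swap a x).orbitFinset a, (π * swap a x).orbitFinset x} := by
  intro T hT
  obtain ⟨y, -, rfl⟩ := mem_image.1 hT
  by_cases hya : π.SameCycle y a
  · rcases hya.mul_swap_left_or_right (x := x) with h | h <;>
      simp [orbitFinset_eq_iff.2 h]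
  by_cases hyx : π.SameCycle y x
  · rw [swap_comm]
    rcases hyx.mul_swap_left_or_right (x := a) with h | h <;>
      simp [orbitFinset_eq_iff.2 h]
  have horb : (π * swap a x).orbitFinset y = π.orbitFinset y := by
    ext z
    simp only [mem_orbitFinset, sameCycle_mul_swap_iff_of_not_sameCycle hya hyx]
  simp only [horb, mem_union, mem_sdiff, mem_image, mem_univ, true_and, mem_insert,
    mem_singleton, orbitFinset_eq_iff, hya, hyx, or_self, not_false_eq_true, and_true]
  exact .inl ⟨y, .refl _ _⟩

theorem numOrbits_mul_swap_add_card_le :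
    (π * swap a x).numOrbits + #{π.orbitFinset a, π.orbitFinset x} ≤
      π.numOrbits + #{(π * swap a x).orbitFinset a, (π * swap a x).orbitFinset x} := by
  have hsub : ({π.orbitFinset a, π.orbitFinset x} : Finset (Finset α)) ⊆
      univ.image π.orbitFinset := by
    simp [insert_subset_iff]
  have := (card_le_card (image_orbitFinset_mul_swap_subset (π := π) (a := a) (x := x))).trans
    (card_union_le _ _)
  have := card_sdiff_add_card_eq_card hsub
  rw [numOrbits, numOrbits]
  omega

theorem SameCycle.numOrbits_mul_swap_le (h : π.SameCycle a x) :
    (π * swap a x).numOrbits ≤ π.numOrbits + 1 := by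
  have := numOrbits_mul_swap_add_card_le (π := π) (a := a) (x := x)
  rw [orbitFinset_eq_iff.2 h, pair_eq_singleton, card_singleton] at this
  have := card_le_two (α := Finset α) (a := (π * swap a x).orbitFinset a)
    (b := (π * swap a x).orbitFinset x)
  omega

theorem numOrbits_mul_swap_lt_of_not_sameCycle (h : ¬π.SameCycle a x) :
    (π * swap a x).numOrbits < π.numOrbits := by
  have := numOrbits_mul_swap_add_card_le (π := π) (a := a) (x := x)
  rw [orbitFinset_eq_iff.2 (sameCycle_mul_swap_of_not_sameCycle h), pair_eq_singleton,
    card_singleton, card_pair (mt orbitFinset_eq_iff.1 h)] at this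
  omega

end MulSwap

def potential (O : Finset α) (π : Perm α) : ℕ := 2 * #(π.support \ O) + π.numOrbits

variable {O : Finset α} {π : Perm α}

theorem potential_mul_swap_le {a x : α} (hax : a ≠ x) (hx : x ∈ O) :
    potential O (π * swap a x) ≤ potential O π + 1 := by
  have hsub : (π * swap a x).support \ O ⊆ insert a (π.support \ O) := by
    intro y hy
    have := support_mul_le π (swap a x) (mem_sdiff.1 hy).1
    rw [sup_eq_union, support_swap hax] at this
    grind
  unfold potential
  by_cases h : π.SameCycle a x
  · have ha : a ∈ π.support := mem_support.2 fun ha => hax (h.eq_of_left ha)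
    have hsub' : (π * swap a x).support \ O ⊆ π.support \ O := fun y hy => by
      rcases mem_insert.1 (hsub hy) with rfl | hy'
      · exact mem_sdiff.2 ⟨ha, (mem_sdiff.1 hy).2⟩
      · exact hy'
    have := card_le_card hsub'
    have := h.numOrbits_mul_swap_le
    omega
  · have := (card_le_card hsub).trans (card_insert_le _ _)
    have := numOrbits_mul_swap_lt_of_not_sameCycle h
    omega

theorem potential_mul_le_of_isThreeCycle {g : Perm α} (hg : g.IsThreeCycle) {x : α}
    (hxg : x ∈ g.support) (hxO : x ∈ O) : potential O (π * g) ≤ potential O π + 2 := by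
  have hg3 : g (g (g x)) = x := by
    have := congr($(pow_orderOf_eq_one g) x)
    rwa [hg.orderOf, pow_succ, pow_two, mul_apply, mul_apply, one_apply] at this
  have hdec := (hg.eq_swap_mul_swap_iff_mem_support (a := g (g x))).2
    (apply_mem_support.2 (apply_mem_support.2 hxg))
  rw [hg3, swap_comm x] at hdec
  have hnodup := hg.nodup_iff_mem_support.2 hxg
  simp only [List.nodup_cons, List.mem_cons, not_or] at hnodup
  calc potential O (π * g) = potential O (π * swap (g (g x)) x * swap (g x) x) := by
        rw [mul_assoc, ← hdec]
    _ ≤ potential O (π * swap (g (g x)) x) + 1 := potential_mul_swap_le (Ne.symm hnodup.1.1) hxO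
    _ ≤ potential O π + 2 := by
        have := potential_mul_swap_le (π := π) (Ne.symm hnodup.1.2.1) hxO
        omega

theorem potential_list_prod_le (cs : List (Perm α))
    (hcs : ∀ c ∈ cs, c.IsThreeCycle ∧ ∃ x ∈ c.support, x ∈ O) :
    potential O cs.prod ≤ Fintype.card α + 2 * cs.length := by
  induction cs using List.reverseRecOn with
  | nil => simp [potential, numOrbits_one]
  | append_singleton l c ih =>
    obtain ⟨hc, x, hxc, hxO⟩ := hcs c (by simp)
    have := potential_mul_le_of_isThreeCycle (π := l.prod) hc hxc hxO
    have := ih fun c' hc' => hcs c' (by simp [hc'])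
    simp only [List.prod_append, List.prod_singleton, List.length_append, List.length_singleton]
    omega

end Equiv.Perm

theorem stmt17_general (n r d : ℕ) (σ : Equiv.Perm (Fin (n + d)))
    (hfix : ∀ i : Fin (n + d), n ≤ i.val → σ i = i)
    (hsupp : σ.support.card = n) (hcyc : σ.cycleType.card = r)
    (cs : List (Equiv.Perm (Fin (n + d))))
    (hprod : cs.prod = σ⁻¹)
    (hc : ∀ c ∈ cs, c.IsCycle ∧ c.support.card = 3 ∧
      ∃ i : Fin (n + d), n ≤ i.val ∧ i ∈ c.support) :
    n + r ≤ 2 * cs.length := by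
  set O : Finset (Fin (n + d)) := {i | n ≤ i.val}
  have hbound := Perm.potential_list_prod_le (O := O) cs fun c hcs => by
    obtain ⟨-, h3, i, hi, hic⟩ := hc c hcs
    exact ⟨card_support_eq_three_iff.1 h3, i, hic, by simpa [O] using hi⟩
  have hsuppO : σ.support \ O = σ.support := by
    refine sdiff_eq_self_of_disjoint (disjoint_left.2 fun i hi hiO => ?_)
    exact Perm.mem_support.1 hi (hfix i (by simpa [O] using hiO))
  have hfixed : #σ.supportᶜ = d := by
    rw [card_compl, hsupp, Fintype.card_fin, Nat.add_sub_cancel_left]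
  rw [hprod, Perm.potential, Perm.numOrbits_eq, Perm.support_inv, Perm.cycleType_inv,
    hsuppO, hsupp, hcyc, hfixed, Fintype.card_fin] at hbound
  omega

theorem stmt17 (n r d : ℕ) (hd : 1 ≤ d) (σ : Equiv.Perm (Fin (n + d)))
    (hfix : ∀ i : Fin (n + d), n ≤ i.val → σ i = i)
    (hsupp : σ.support.card = n) (hcyc : σ.cycleType.card = r)
    (cs : List (Equiv.Perm (Fin (n + d))))
    (hprod : cs.prod = σ⁻¹)
    (hc : ∀ c ∈ cs, c.IsCycle ∧ c.support.card = 3 ∧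
      ∃ i : Fin (n + d), n ≤ i.val ∧ i ∈ c.support) :
    n + r ≤ 2 * cs.length :=
  stmt17_general n r d σ hfix hsupp hcyc cs hprod hc
end

section
/- Let X be a countably infinite type and σ a finitary permutation of X (σ moves only finitely many elements). Then there exist functions f₁, f₂ defined on subsets of X ∪ {z} (z a fresh element, using a fixed enumeration of a cofinite part of X) such that f₁ is injective but not surjective onto its codomain ('forgetful'), f₂ is injective and surjective onto the complement appropriately ('retentive'), f₁ and f₂ have different domains, and f₂ ∘ f₁ = σ⁻¹ on X. Concretely: if σ = τ₁⋯τ_m is a disjoint cycle decomposition with τᵢ = (a_{i,1} ⋯ a_{i,kᵢ}) and b₁, b₂, … enumerates the elements of X fixed by σ, then σ⁻¹ equals the composition of the 'backward' infinite cycle (⋯ b₃ b₂ b₁ a_{m,k_m} ⋯ a_{2,k₂} z a_{1,k₁}) after the 'forward' infinite cycle (a_{1,k₁} ⋯ a_{1,1} z a_{2,k₂} ⋯ a_{2,1} a_{3,k₃} ⋯ a_{m,1} b₁ b₂ b₃ ⋯), evaluated at every element of X. -/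
/-!
Cut the forward ray into blocks: each cycle of `σ` read backwards, the fresh point `z` as a
block of its own after the first cycle, and the fixed points `b₁, b₂, …` as singleton blocks.
The backward ray lists the first entries of the blocks. `f₁` shifts one step forward along
the forward ray, and `f₂` shifts one step back along the backward ray and fixes all other
points. So `f₂ ∘ f₁` sends each entry of a block to the next one in the block and the last
entry of a block to its first entry: it is the product of the cycles formed by the blocks,
and a cycle of `σ` read backwards is a cycle of `σ⁻¹`.
-/

open Function

namespace Stream'

variable {α : Type*}

theorem get_append (x : List α) (a : Stream' α) (n : ℕ) :
    (x ++ₛ a).get n = if h : n < x.length then x[n] else a.get (n - x.length) := by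
  split_ifs with h
  · exact get_append_left n x a h
  · obtain ⟨k, rfl⟩ := Nat.exists_eq_add_of_le (not_lt.mp h)
    simp

theorem mem_range_get_append {x : List α} {a : Stream' α} {y : α} :
    y ∈ Set.range (x ++ₛ a).get ↔ y ∈ x ∨ y ∈ Set.range a.get := by
  constructor
  · rintro ⟨n, rfl⟩
    rw [get_append]
    split_ifs with h
    · exact .inl (List.getElem_mem h)
    · exact .inr ⟨_, rfl⟩
  · rintro (hy | ⟨n, rfl⟩)
    · obtain ⟨i, hi, rfl⟩ := List.mem_iff_getElem.mp hy
      exact ⟨i, get_append_left i x a hi⟩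
    · exact ⟨x.length + n, get_append_right n x a⟩

theorem injective_get_append_iff {x : List α} {a : Stream' α} :
    Injective (x ++ₛ a).get ↔ x.Nodup ∧ Injective a.get ∧ ∀ n, a.get n ∉ x := by
  constructor
  · intro h
    refine ⟨List.nodup_iff_injective_get.mpr fun i j hij => Fin.ext (h ?_), fun m n hmn => ?_,
      fun n hn => ?_⟩
    · simpa [get_append_left _ _ _ i.isLt, get_append_left _ _ _ j.isLt] using hij
    · simpa using @h (x.length + m) (x.length + n) (by simpa using hmn)
    · obtain ⟨i, hi, hin⟩ := List.mem_iff_getElem.mp hn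
      have := @h i (x.length + n) (by rw [get_append_left i x a hi, hin, get_append_right])
      omega
  · rintro ⟨hx, ha, hax⟩ m n hmn
    rw [get_append, get_append] at hmn
    split_ifs at hmn with hm hn hn
    · exact (hx.getElem_inj_iff).mp hmn
    · exact absurd (hmn ▸ List.getElem_mem hm) (hax _)
    · exact absurd (hmn ▸ List.getElem_mem hn) (hax _)
    · have := ha hmn
      omega

end Stream'

namespace List

variable {α β : Type*}

theorem headI_map_some (l : List α) : (l.map some).headI = l.head? := by
  cases l <;> rfl

theorem headI_mem [Inhabited α] {l : List α} (h : l ≠ []) : l.headI ∈ l := by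
  obtain ⟨x, xs, rfl⟩ := exists_cons_of_ne_nil h
  exact mem_cons_self

section FormPerm

variable [DecidableEq α]

theorem formPerm_map_apply [DecidableEq β] {f : α → β} (hf : Injective f) (l : List α) (x : α) :
    (l.map f).formPerm (f x) = f (l.formPerm x) := by
  induction l with
  | nil => simp
  | cons a l ih =>
    cases l with
    | nil => simp
    | cons b l => simp_all [formPerm_cons_cons, hf.swap_apply]

theorem prod_map_formPerm_apply_of_forall_notMem {L : List (List α)} {x : α}
    (hx : ∀ l ∈ L, x ∉ l) : (L.map formPerm).prod x = x := by
  induction L with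
  | nil => simp
  | cons l L ih =>
    simp only [map_cons, prod_cons, Equiv.Perm.mul_apply, forall_mem_cons] at hx ⊢
    rw [ih hx.2, formPerm_apply_of_notMem hx.1]

theorem prod_map_formPerm_apply_of_mem {L : List (List α)}
    (hL : L.Pairwise fun l l' => ∀ a ∈ l, a ∉ l') {l : List α} (hl : l ∈ L) {x : α}
    (hx : x ∈ l) : (L.map formPerm).prod x = l.formPerm x := by
  induction L with
  | nil => simp at hl
  | cons l' L ih =>
    rw [pairwise_cons] at hL
    simp only [map_cons, prod_cons, Equiv.Perm.mul_apply]
    rcases mem_cons.mp hl with rfl | hl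
    · rw [prod_map_formPerm_apply_of_forall_notMem fun l'' hl'' => hL.1 l'' hl'' x hx]
    · rw [ih hL.2 hl]
      exact formPerm_apply_of_notMem fun h => hL.1 l hl _ h (formPerm_apply_mem_of_mem hx)

theorem prod_map_formPerm_inv_apply_of_mem {L : List (List α)}
    (hL : L.Pairwise fun l l' => ∀ a ∈ l, a ∉ l') {l : List α} (hl : l ∈ L) {x : α}
    (hx : x ∈ l) : (L.map formPerm).prod⁻¹ x = l.reverse.formPerm x := by
  have hmem : l.reverse.formPerm x ∈ l :=
    mem_reverse.mp (formPerm_apply_mem_of_mem (mem_reverse.mpr hx))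
  rw [Equiv.Perm.inv_eq_iff_eq, prod_map_formPerm_apply_of_mem hL hl hmem, formPerm_reverse]
  simp

end FormPerm

section Blocks

open Stream'

variable [Inhabited α]

theorem get_flatten_append_zero {Bs : List (List α)} (hne : ∀ B ∈ Bs, B ≠ []) (c : Stream' α) :
    (Bs.flatten ++ₛ c).get 0 = (Bs.map headI ++ₛ c).get 0 := by
  cases Bs with
  | nil => rfl
  | cons B Bs =>
    obtain ⟨x, xs, rfl⟩ := exists_cons_of_ne_nil (hne B mem_cons_self)
    rfl

theorem injective_get_map_headI_append {Bs : List (List α)} {c : Stream' α}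
    (hne : ∀ B ∈ Bs, B ≠ []) (h : Injective (Bs.flatten ++ₛ c).get) :
    Injective (Bs.map headI ++ₛ c).get := by
  obtain ⟨hF, hc, hcF⟩ := injective_get_append_iff.mp h
  have hhead : ∀ B ∈ Bs, B.headI ∈ B := fun B hB => headI_mem (hne B hB)
  refine injective_get_append_iff.mpr ⟨?_, hc, fun n hn => ?_⟩
  · rw [Nodup, pairwise_map]
    exact (nodup_flatten.mp hF).2.imp_of_mem fun hB hB' hd he => hd (hhead _ hB) (he ▸ hhead _ hB')
  · obtain ⟨B, hB, hnB⟩ := mem_map.mp hn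
    exact hcF n (mem_flatten.mpr ⟨B, hB, hnB ▸ hhead B hB⟩)

theorem notMem_range_get_map_headI_append_of_mem_tail {Bs : List (List α)} {c : Stream' α}
    (hne : ∀ B ∈ Bs, B ≠ []) (h : Injective (Bs.flatten ++ₛ c).get) {B : List α} (hB : B ∈ Bs)
    {t : α} (ht : t ∈ B.tail) :
    t ∉ Set.range (Bs.map headI ++ₛ c).get := by
  obtain ⟨hF, -, hcF⟩ := injective_get_append_iff.mp h
  obtain ⟨hnd, hdisj⟩ := nodup_flatten.mp hF
  have htF : t ∈ Bs.flatten := mem_flatten.mpr ⟨B, hB, mem_of_mem_tail ht⟩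
  intro hr
  rcases Stream'.mem_range_get_append.mp hr with hr | ⟨n, rfl⟩
  · obtain ⟨B', hB', rfl⟩ := mem_map.mp hr
    obtain ⟨x, xs, rfl⟩ := exists_cons_of_ne_nil (ne_nil_of_mem (mem_of_mem_tail ht))
    by_cases hBB' : x :: xs = B'
    · subst hBB'
      exact (nodup_cons.mp (hnd _ hB)).1 ht
    · have : Std.Symm (α := List α) Disjoint := ⟨fun _ _ h => h.symm⟩
      exact hdisj.forall hB hB' hBB' (mem_of_mem_tail ht) (headI_mem (hne B' hB'))
  · exact hcF n htF

variable [DecidableEq α]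

theorem apply_get_flatten_append_succ {f τ : α → α} {Bs : List (List α)} {c : Stream' α}
    (hne : ∀ B ∈ Bs, B ≠ []) (hnd : ∀ B ∈ Bs, B.Nodup)
    (hhead : ∀ k, f ((Bs.map headI ++ₛ c).get (k + 1)) = (Bs.map headI ++ₛ c).get k)
    (hfix : ∀ B ∈ Bs, ∀ t ∈ B.tail, f t = t)
    (hτ : ∀ B ∈ Bs, ∀ x ∈ B, τ x = B.formPerm x) (hτc : ∀ n, τ (c.get n) = c.get n) (i : ℕ) :
    f ((Bs.flatten ++ₛ c).get (i + 1)) = τ ((Bs.flatten ++ₛ c).get i) := by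
  induction Bs generalizing i with
  | nil => simpa [hτc] using hhead i
  | cons B Bs ih =>
    simp only [forall_mem_cons] at hne hnd hfix hτ
    rw [flatten_cons, append_append_stream]
    rcases lt_trichotomy (i + 1) B.length with hi | hi | hi
    · rw [get_append_left _ _ _ hi, get_append_left _ _ _ (by omega), hτ.1 _ (getElem_mem _),
        formPerm_apply_lt_getElem _ hnd.1 i hi, ← getElem_tail (by rw [length_tail]; omega)]
      exact hfix.1 _ (getElem_mem _)
    · -- crossing into the next block: `f` sends its head to the head of `B`
      obtain ⟨x, xs, rfl⟩ := exists_cons_of_ne_nil hne.1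
      obtain rfl : i = xs.length := by simpa using hi
      have := hhead 0
      simp only [map_cons, cons_append_stream, get_succ_cons, get_zero_cons] at this
      rw [get_append_left xs.length _ _ (by simp), hτ.1 _ (getElem_mem _),
        formPerm_apply_getElem_length, show xs.length + 1 = (x :: xs).length from rfl,
        get_append_length, get_flatten_append_zero hne.2]
      exact this
    · obtain ⟨k, rfl⟩ := Nat.exists_eq_add_of_le (Nat.lt_succ_iff.mp hi)
      rw [Nat.add_assoc, get_append_right, get_append_right]
      exact ih hne.2 hnd.2 (fun k => hhead (k + 1)) hfix.2 hτ.2 k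

theorem exists_forgetful_retentive_of_blocks {Bs : List (List α)} {c : Stream' α} {τ : α → α}
    (hne : ∀ B ∈ Bs, B ≠ []) (hlong : ∃ B ∈ Bs, 2 ≤ B.length)
    (hinj : Injective (Bs.flatten ++ₛ c).get) (hsurj : Surjective (Bs.flatten ++ₛ c).get)
    (hτ : ∀ B ∈ Bs, ∀ x ∈ B, τ x = B.formPerm x) (hτc : ∀ n, τ (c.get n) = c.get n) :
    ∃ f₁ f₂ : α → α,
      let g := (Bs.flatten ++ₛ c).get
      let r := (Bs.map headI ++ₛ c).get
      (∀ i, f₁ (g i) = g (i + 1)) ∧ Injective f₁ ∧ ¬ Surjective f₁ ∧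
      (∀ i, f₂ (r (i + 1)) = r i) ∧ (∀ t, t ∉ Set.range r → f₂ t = t) ∧ Surjective f₂ ∧
      Set.range g ≠ Set.range r ∧ ∀ x, f₂ (f₁ x) = τ x := by
  set g := (Bs.flatten ++ₛ c).get
  set r := (Bs.map headI ++ₛ c).get
  have hr : Injective r := injective_get_map_headI_append hne hinj
  have hnd : ∀ B ∈ Bs, B.Nodup := (nodup_flatten.mp (injective_get_append_iff.mp hinj).1).1
  let e := Equiv.ofBijective g ⟨hinj, hsurj⟩
  let f₂ := extend (fun i => r (i + 1)) r id
  have hf₁ : ∀ i, (e ∘ Nat.succ ∘ e.symm) (g i) = g (i + 1) := fun i =>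
    congrArg (e ∘ Nat.succ) (e.symm_apply_apply i)
  have hf₂r : ∀ i, f₂ (r (i + 1)) = r i := (hr.comp (add_left_injective 1)).extend_apply r id
  have hf₂fix : ∀ t, t ∉ Set.range r → f₂ t = t := fun t ht =>
    extend_apply' _ _ _ fun ⟨i, hi⟩ => ht ⟨i + 1, hi⟩
  refine ⟨e ∘ Nat.succ ∘ e.symm, f₂, hf₁,
    e.injective.comp (Nat.succ_injective.comp e.symm.injective), ?_, hf₂r, hf₂fix, ?_, ?_, ?_⟩
  · intro hs
    obtain ⟨t, ht⟩ := hs (g 0)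
    exact Nat.succ_ne_zero _ (hinj ht)
  · intro t
    by_cases ht : t ∈ Set.range r
    · obtain ⟨i, rfl⟩ := ht
      exact ⟨_, hf₂r i⟩
    · exact ⟨t, hf₂fix t ht⟩
  · obtain ⟨B, hB, hlen⟩ := hlong
    have htail : B.tail ≠ [] := ne_nil_of_length_pos (by rw [length_tail]; omega)
    intro hrange
    exact notMem_range_get_map_headI_append_of_mem_tail hne hinj hB (headI_mem htail)
      (hrange ▸ hsurj _)
  · intro x
    obtain ⟨i, rfl⟩ := hsurj x
    rw [hf₁]
    exact apply_get_flatten_append_succ hne hnd hf₂r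
      (fun B hB t ht => hf₂fix t (notMem_range_get_map_headI_append_of_mem_tail hne hinj hB ht))
      hτ hτc i

end Blocks

end List

section RayBlocks

variable {X : Type*}

def rayBlocks (L : List (List X)) : List (List (Option X)) :=
  L.headI.reverse.map some :: [none] :: L.tail.map fun l => l.reverse.map some

theorem flatten_rayBlocks (L : List (List X)) :
    (rayBlocks L).flatten =
      L.headI.reverse.map some ++ [none] ++ (L.tail.map fun l => l.reverse.map some).flatten := by
  simp [rayBlocks]

theorem map_headI_rayBlocks (L : List (List X)) :
    (rayBlocks L).map List.headI = L.headI.getLast? :: none :: L.tail.map List.getLast? := by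
  have h : ∀ l : List X, (l.reverse.map some).headI = l.getLast? := fun l => by
    rw [List.headI_map_some, List.head?_reverse]
  simp only [rayBlocks, List.map_cons, List.map_map, Function.comp_def, h, List.headI_cons]

variable {L : List (List X)}

theorem mem_rayBlocks (hL : L ≠ []) {B : List (Option X)} :
    B ∈ rayBlocks L ↔ B = [none] ∨ ∃ l ∈ L, B = l.reverse.map some := by
  obtain ⟨l₁, T, rfl⟩ := List.exists_cons_of_ne_nil hL
  simp only [rayBlocks, List.headI_cons, List.tail_cons, List.mem_cons, List.mem_map]
  aesop

theorem flatten_rayBlocks_perm (hL : L ≠ []) :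
    (rayBlocks L).flatten.Perm (none :: (L.map fun l => l.reverse.map some).flatten) := by
  obtain ⟨l₁, T, rfl⟩ := List.exists_cons_of_ne_nil hL
  exact List.perm_middle

theorem some_mem_flatten_rayBlocks (hL : L ≠ []) {x : X} :
    some x ∈ (rayBlocks L).flatten ↔ ∃ l ∈ L, x ∈ l := by
  simp [(flatten_rayBlocks_perm hL).mem_iff]

theorem nodup_flatten_rayBlocks (hL : L ≠ []) (hnd : ∀ l ∈ L, l.Nodup)
    (hdisj : L.Pairwise fun l l' => ∀ a ∈ l, a ∉ l') : (rayBlocks L).flatten.Nodup := by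
  refine (flatten_rayBlocks_perm hL).nodup_iff.mpr
    (List.nodup_cons.mpr ⟨by simp, List.nodup_flatten.mpr ⟨?_, ?_⟩⟩)
  · simp only [List.mem_map]
    rintro _ ⟨l, hl, rfl⟩
    exact (List.nodup_reverse.mpr (hnd l hl)).map (Option.some_injective X)
  · refine List.pairwise_map.mpr (hdisj.imp fun h => ?_)
    exact (List.disjoint_reverse_left.mpr (List.disjoint_reverse_right.mpr
      fun a ha ha' => h a ha ha')).map (Option.some_injective X)

theorem ne_nil_of_mem_rayBlocks (hL : L ≠ []) (hne : ∀ l ∈ L, l ≠ []) {B : List (Option X)}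
    (hB : B ∈ rayBlocks L) : B ≠ [] := by
  rcases (mem_rayBlocks hL).mp hB with rfl | ⟨l, hl, rfl⟩
  · simp
  · simpa using hne l hl

theorem option_map_eq_formPerm_of_mem_rayBlocks [DecidableEq X] (hL : L ≠ []) {τ : X → X}
    (hτ : ∀ l ∈ L, ∀ x ∈ l, τ x = l.reverse.formPerm x) {B : List (Option X)}
    (hB : B ∈ rayBlocks L) {x : Option X} (hx : x ∈ B) : Option.map τ x = B.formPerm x := by
  rcases (mem_rayBlocks hL).mp hB with rfl | ⟨l, hl, rfl⟩
  · simp_all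
  · obtain ⟨y, hy, rfl⟩ := List.mem_map.mp hx
    rw [List.formPerm_map_apply (Option.some_injective X), Option.map_some,
      hτ l hl y (List.mem_reverse.mp hy)]

variable {b : ℕ → X}

theorem injective_get_flatten_rayBlocks_append (hL : L ≠ []) (hnd : ∀ l ∈ L, l.Nodup)
    (hdisj : L.Pairwise fun l l' => ∀ a ∈ l, a ∉ l') (hb : Function.Injective b)
    (hbL : ∀ n, ∀ l ∈ L, b n ∉ l) :
    Function.Injective ((rayBlocks L).flatten ++ₛ fun n => some (b n)).get := by
  refine Stream'.injective_get_append_iff.mpr ⟨nodup_flatten_rayBlocks hL hnd hdisj,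
    fun m n h => hb (Option.some_injective X h), fun n hn => ?_⟩
  obtain ⟨l, hl, hx⟩ := (some_mem_flatten_rayBlocks hL).mp hn
  exact hbL n l hl hx

theorem surjective_get_flatten_rayBlocks_append (hL : L ≠ [])
    (hbL : ∀ x, (∀ l ∈ L, x ∉ l) → x ∈ Set.range b) :
    Function.Surjective ((rayBlocks L).flatten ++ₛ fun n => some (b n)).get := by
  intro t
  refine Stream'.mem_range_get_append.mpr ?_
  rcases t with _ | x
  · exact .inl (by simp [rayBlocks])
  by_cases hx : ∀ l ∈ L, x ∉ l
  · obtain ⟨n, rfl⟩ := hbL x hx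
    exact .inr ⟨n, rfl⟩
  · exact .inl ((some_mem_flatten_rayBlocks hL).mpr (by simpa using hx))

end RayBlocks

theorem stmt19_general {X : Type*} [DecidableEq X]
    (σ : Equiv.Perm X)
    (L : List (List X)) (hL : L ≠ [])
    (hnd : ∀ l ∈ L, l.Nodup) (hlen : ∀ l ∈ L, 2 ≤ l.length)
    (hdisj : L.Pairwise fun l l' => ∀ a ∈ l, a ∉ l')
    (hσ : σ = (L.map List.formPerm).prod)
    (hsupp : ∀ x : X, σ x = x ↔ ∀ l ∈ L, x ∉ l)
    (b : ℕ → X) (hb : Function.Injective b)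
    (hbr : Set.range b = {x : X | σ x = x}) :
    ∃ f₁ f₂ : Option X → Option X,
      -- the forward ray: a_{1,k₁} ⋯ a_{1,1} z a_{2,k₂} ⋯ a_{2,1} ⋯ a_{m,1} b₁ b₂ ⋯
      let P : List (Option X) :=
        (L.headI.reverse.map some) ++ [none] ++
          (L.tail.map fun l => l.reverse.map some).flatten
      let g : ℕ → Option X := fun i =>
        if h : i < P.length then P.get ⟨i, h⟩ else some (b (i - P.length))
      -- the backward ray, read from its right end: a_{1,k₁}, z, a_{2,k₂}, ⋯, a_{m,k_m}, b₁, b₂ ⋯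
      let R : List (Option X) :=
        L.headI.getLast? :: none :: (L.tail.map List.getLast?)
      let r : ℕ → Option X := fun i =>
        if h : i < R.length then R.get ⟨i, h⟩ else some (b (i - R.length))
      -- f₁ is the forgetful forward swap, f₂ the retentive backward swap
      (∀ i, f₁ (g i) = g (i + 1)) ∧
      Function.Injective f₁ ∧ ¬ Function.Surjective f₁ ∧
      (∀ i, f₂ (r (i + 1)) = r i) ∧
      (∀ t, t ∉ Set.range r → f₂ t = t) ∧
      Function.Surjective f₂ ∧
      Set.range g ≠ Set.range r ∧
      ∀ x : X, f₂ (f₁ (some x)) = some (σ⁻¹ x) := by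
  have hfixed : ∀ x, x ∈ Set.range b ↔ ∀ l ∈ L, x ∉ l := fun x => by rw [hbr]; exact hsupp x
  have hinv : ∀ l ∈ L, ∀ x ∈ l, σ⁻¹ x = l.reverse.formPerm x := fun l hl x hx => by
    rw [hσ, List.prod_map_formPerm_inv_apply_of_mem hdisj hl hx]
  have hbfix : ∀ n, σ⁻¹ (b n) = b n := fun n =>
    Equiv.Perm.inv_eq_iff_eq.mpr ((Set.ext_iff.mp hbr _).mp ⟨n, rfl⟩).symm
  have hne : ∀ l ∈ L, l ≠ [] := fun l hl => List.ne_nil_of_length_pos (by linarith [hlen l hl])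
  obtain ⟨f₁, f₂, hf₁, hf₁inj, hf₁surj, hf₂, hf₂fix, hf₂surj, hrange, hcomp⟩ :=
    List.exists_forgetful_retentive_of_blocks (Bs := rayBlocks L)
      (fun _ => ne_nil_of_mem_rayBlocks hL hne)
      ⟨_, List.mem_cons_self, by simpa using hlen _ (List.headI_mem hL)⟩
      (injective_get_flatten_rayBlocks_append hL hnd hdisj hb fun n => (hfixed _).mp ⟨n, rfl⟩)
      (surjective_get_flatten_rayBlocks_append hL fun x => (hfixed x).mpr)
      (fun _ => option_map_eq_formPerm_of_mem_rayBlocks hL hinv)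
      (fun n => congrArg some (hbfix n))
  refine ⟨f₁, f₂, ?_⟩
  intro P g R r
  have hg : g = ((rayBlocks L).flatten ++ₛ fun n => some (b n)).get := funext fun i =>
    (Stream'.get_append _ _ i).trans (by rw [flatten_rayBlocks]; rfl) |>.symm
  have hr : r = ((rayBlocks L).map List.headI ++ₛ fun n => some (b n)).get := funext fun i =>
    (Stream'.get_append _ _ i).trans (by rw [map_headI_rayBlocks]; rfl) |>.symm
  rw [hg, hr]
  exact ⟨hf₁, hf₁inj, hf₁surj, hf₂, hf₂fix, hf₂surj, hrange, fun x => hcomp (some x)⟩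

theorem stmt19 {X : Type*} [DecidableEq X] [Countable X] [Infinite X]
    (σ : Equiv.Perm X)
    (L : List (List X)) (hL : L ≠ [])
    (hnd : ∀ l ∈ L, l.Nodup) (hlen : ∀ l ∈ L, 2 ≤ l.length)
    (hdisj : L.Pairwise fun l l' => ∀ a ∈ l, a ∉ l')
    (hσ : σ = (L.map List.formPerm).prod)
    (hsupp : ∀ x : X, σ x = x ↔ ∀ l ∈ L, x ∉ l)
    (b : ℕ → X) (hb : Function.Injective b)
    (hbr : Set.range b = {x : X | σ x = x}) :
    ∃ f₁ f₂ : Option X → Option X,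
      -- the forward ray: a_{1,k₁} ⋯ a_{1,1} z a_{2,k₂} ⋯ a_{2,1} ⋯ a_{m,1} b₁ b₂ ⋯
      let P : List (Option X) :=
        (L.headI.reverse.map some) ++ [none] ++
          (L.tail.map fun l => l.reverse.map some).flatten
      let g : ℕ → Option X := fun i =>
        if h : i < P.length then P.get ⟨i, h⟩ else some (b (i - P.length))
      -- the backward ray, read from its right end: a_{1,k₁}, z, a_{2,k₂}, ⋯, a_{m,k_m}, b₁, b₂ ⋯
      let R : List (Option X) :=
        L.headI.getLast? :: none :: (L.tail.map List.getLast?)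
      let r : ℕ → Option X := fun i =>
        if h : i < R.length then R.get ⟨i, h⟩ else some (b (i - R.length))
      -- f₁ is the forgetful forward swap, f₂ the retentive backward swap
      (∀ i, f₁ (g i) = g (i + 1)) ∧
      Function.Injective f₁ ∧ ¬ Function.Surjective f₁ ∧
      (∀ i, f₂ (r (i + 1)) = r i) ∧
      (∀ t, t ∉ Set.range r → f₂ t = t) ∧
      Function.Surjective f₂ ∧
      Set.range g ≠ Set.range r ∧
      ∀ x : X, f₂ (f₁ (some x)) = some (σ⁻¹ x) :=
  stmt19_general σ L hL hnd hlen hdisj hσ hsupp b hb hbr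
end
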